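/- arXiv:0705.3148 — 7 statements merged into one kernel-verified Lean document; each statement's English description precedes it below -/
import Mathlib

section
/- For every k ∈ ℕ and every spherical harmonic H_k ∈ ℋ_k, the super Laplace–Beltrami operator Δ_LB = x²Δ − 𝔼(M − 2 + 𝔼) satisfies Δ_LB H_k = −k(M − 2 + k)·H_k; that is, ℋ_k is an eigenspace of Δ_LB with eigenvalue −k(M − 2 + k). -/
set_option synthInstance.maxHeartbeats 1000000
set_option maxHeartbeats 1000000

open scoped TensorProduct

noncomputable section

namespace Super

/-- The algebra of ordinary polynomials in `m` commuting variables. -/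
abbrev Poly (m : ℕ) := MvPolynomial (Fin m) ℝ

/-- The Grassmann algebra on `2n` anticommuting generators. -/
abbrev Grass (n : ℕ) := ExteriorAlgebra ℝ (Fin (2 * n) → ℝ)

/-- The algebra `𝒫` of superpolynomials. -/
abbrev P (m n : ℕ) := Poly m ⊗[ℝ] Grass n

variable (m n : ℕ)

/-- The anticommuting generator `x̀_j` (0-indexed). -/
def gg (j : Fin (2 * n)) : Grass n := ExteriorAlgebra.ι ℝ (Pi.single j 1)

/-- The odd derivation `∂_{x̀_j}` on the Grassmann algebra: contraction with the
`j`-th dual basis vector. -/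
def gd (j : Fin (2 * n)) : Module.End ℝ (Grass n) :=
  CliffordAlgebra.contractLeft (LinearMap.proj j)

def idx0 (j : Fin n) : Fin (2 * n) := ⟨2 * j.val, by have := j.isLt; omega⟩
def idx1 (j : Fin n) : Fin (2 * n) := ⟨2 * j.val + 1, by have := j.isLt; omega⟩

/-- `∂_{x_i}` acting on superpolynomials. -/
def dx (i : Fin m) : Module.End ℝ (P m n) :=
  TensorProduct.map (MvPolynomial.pderiv i).toLinearMap LinearMap.id

/-- `∂_{x̀_j}` acting on superpolynomials. -/
def dg (j : Fin (2 * n)) : Module.End ℝ (P m n) :=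
  TensorProduct.map LinearMap.id (gd n j)

/-- multiplication by `x_i`. -/
def mulX (i : Fin m) : Module.End ℝ (P m n) :=
  LinearMap.mulLeft ℝ ((MvPolynomial.X i : Poly m) ⊗ₜ (1 : Grass n))

/-- multiplication by `x̀_j`. -/
def mulG (j : Fin (2 * n)) : Module.End ℝ (P m n) :=
  LinearMap.mulLeft ℝ ((1 : Poly m) ⊗ₜ gg n j)

/-- The super-Laplace operator
`Δ = 4 ∑_{j=1}^n ∂_{x̀_{2j-1}} ∂_{x̀_{2j}} - ∑_{i=1}^m ∂_{x_i}²` (written 0-indexed). -/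
def Delta : Module.End ℝ (P m n) :=
  4 • (∑ j : Fin n, dg m n (idx0 n j) ∘ₗ dg m n (idx1 n j)) -
    ∑ i : Fin m, dx m n i ∘ₗ dx m n i

/-- The super-Euler operator `𝔼 = ∑ x_i ∂_{x_i} + ∑ x̀_j ∂_{x̀_j}`. -/
def Euler : Module.End ℝ (P m n) :=
  ∑ i : Fin m, mulX m n i ∘ₗ dx m n i + ∑ j : Fin (2 * n), mulG m n j ∘ₗ dg m n j

/-- The even element `x² = ∑_{j=1}^n x̀_{2j-1} x̀_{2j} - ∑_{i=1}^m x_i²`. -/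
def xsq : P m n :=
  (1 : Poly m) ⊗ₜ (∑ j : Fin n, gg n (idx0 n j) * gg n (idx1 n j)) -
    ∑ i : Fin m, (MvPolynomial.X i * MvPolynomial.X i : Poly m) ⊗ₜ (1 : Grass n)

/-- The superdimension `M = m - 2n`. -/
def Mdim : ℤ := (m : ℤ) - 2 * n

/-- Evaluation at the origin: the constant term of a superpolynomial. -/
def eval0 : P m n →ₗ[ℝ] ℝ :=
  (TensorProduct.lid ℝ ℝ).toLinearMap ∘ₗ
    TensorProduct.map (MvPolynomial.aeval (fun _ : Fin m => (0 : ℝ))).toLinearMap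
      (ExteriorAlgebra.algebraMapInv).toLinearMap

/-- `𝒫_k`, the space of homogeneous superpolynomials of degree `k`
(the eigenspace of `𝔼` with eigenvalue `k`). -/
def Pk (k : ℕ) : Submodule ℝ (P m n) :=
  LinearMap.ker (Euler m n - (k : ℝ) • LinearMap.id)

/-- `ℋ_k`, the space of spherical harmonics of degree `k`. -/
def Hk (k : ℕ) : Submodule ℝ (P m n) :=
  Pk m n k ⊓ LinearMap.ker (Delta m n)

/-- The integral over the supersphere (Pizzetti formula with `m` replaced by `M`).
Terms where `k + M/2` is a pole of `Γ` vanish automatically since `Real.Gamma`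
is zero at nonpositive integers. -/
def SS (R : P m n) : ℝ :=
  ∑' k : ℕ, (-1 : ℝ) ^ k * (2 * Real.pi ^ ((Mdim m n : ℝ) / 2)) /
      (4 ^ k * k.factorial * Real.Gamma ((k : ℝ) + (Mdim m n : ℝ) / 2)) *
    eval0 m n ((Delta m n ^ k) R)

/-- The integral over the superball. -/
def SB (R : P m n) : ℝ :=
  ∑' k : ℕ, (-1 : ℝ) ^ k * Real.pi ^ ((Mdim m n : ℝ) / 2) /
      (4 ^ k * k.factorial * Real.Gamma ((k : ℝ) + (Mdim m n : ℝ) / 2 + 1)) *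
    eval0 m n ((Delta m n ^ k) R)

/-- The super Laplace–Beltrami operator `Δ_LB = x²Δ - 𝔼(M - 2 + 𝔼)`. -/
def DeltaLB : Module.End ℝ (P m n) :=
  LinearMap.mulLeft ℝ (xsq m n) ∘ₗ Delta m n -
    Euler m n ∘ₗ (((Mdim m n : ℝ) - 2) • LinearMap.id + Euler m n)

end Super
/-- For every spherical harmonic `H_k ∈ ℋ_k`, the super Laplace–Beltrami
operator `Δ_LB = x²Δ - 𝔼(M - 2 + 𝔼)` satisfies `Δ_LB H_k = -k(M - 2 + k)·H_k`. -/
theorem laplace_beltrami_eigenvalue (m n : ℕ) (k : ℕ)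
    (H : Super.P m n) (hH : H ∈ Super.Hk m n k) :
    Super.DeltaLB m n H = (-(k : ℝ) * ((Super.Mdim m n : ℝ) - 2 + (k : ℝ))) • H := by
  simp only [Super.Hk, Super.Pk, Submodule.mem_inf, LinearMap.mem_ker] at hH
  obtain ⟨hP, hD⟩ := hH
  have hE : Super.Euler m n H = (k : ℝ) • H := by
    have := hP
    simp [LinearMap.sub_apply, sub_eq_zero] at this
    simpa using this
  simp [Super.DeltaLB, LinearMap.sub_apply, LinearMap.comp_apply, hD, hE,
    LinearMap.add_apply, LinearMap.smul_apply, map_smul, smul_smul]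
  ring_nf
  module
end
end

section
/- The super-Laplace operator Δ : 𝒫 → 𝒫 is surjective if and only if m ≠ 0. -/
set_option synthInstance.maxHeartbeats 1000000
set_option maxHeartbeats 1000000

open scoped TensorProduct

noncomputable section

section Aux

open MvPolynomial Super

/-- `pderiv` decreases total degree. -/
lemma aux_pd_bound {m : ℕ} (i : Fin m) (p : MvPolynomial (Fin m) ℝ) (d : ℕ)
    (h : p.totalDegree ≤ d + 1) : (pderiv i p).totalDegree ≤ d := by
  conv_lhs => rw [p.as_sum]
  rw [map_sum]
  refine (totalDegree_finset_sum _ _).trans (Finset.sup_le fun s hs => ?_)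
  rw [pderiv_monomial]
  by_cases hsi : s i = 0
  · simp [hsi]
  · refine (totalDegree_monomial_le _ _).trans ?_
    have h1 : Finsupp.single i 1 ≤ s := Finsupp.single_le_iff.2 (Nat.one_le_iff_ne_zero.2 hsi)
    have h3 : ((s - Finsupp.single i 1) + Finsupp.single i 1).sum (fun _ e => e)
        = (s - Finsupp.single i 1).sum (fun _ e => e) + 1 := by
      rw [Finsupp.sum_add_index' (fun _ => rfl) (fun _ _ _ => rfl),
        Finsupp.sum_single_index rfl]
    rw [tsub_add_cancel_of_le h1] at h3
    have h4 : (s.sum fun _ e => e) ≤ p.totalDegree := le_totalDegree hs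
    have h5 : ((s - Finsupp.single i 1).sum fun _ => id) =
        (s - Finsupp.single i 1).sum (fun _ e => e) := rfl
    rw [h5]
    omega

/-- `pderiv` kills polynomials of total degree zero. -/
lemma aux_pd_zero {m : ℕ} (i : Fin m) (p : MvPolynomial (Fin m) ℝ)
    (h : p.totalDegree = 0) : pderiv i p = 0 := by
  conv_lhs => rw [p.as_sum]
  rw [map_sum]
  refine Finset.sum_eq_zero fun s hs => ?_
  have h4 : (s.sum fun _ e => e) ≤ 0 := h ▸ le_totalDegree hs
  have hsi : s i = 0 := by
    by_contra hne
    have hi : i ∈ s.support := Finsupp.mem_support_iff.2 hne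
    have hle : s i ≤ ∑ a ∈ s.support, s a :=
      Finset.single_le_sum (f := fun a => s a) (fun _ _ => Nat.zero_le _) hi
    rw [Finsupp.sum] at h4
    omega
  rw [pderiv_monomial]
  simp [hsi]

/-- Sum of squared derivatives over a finite index set. -/
def DbS {m : ℕ} (t : Finset (Fin m)) : Module.End ℝ (MvPolynomial (Fin m) ℝ) :=
  ∑ i ∈ t, (pderiv i).toLinearMap ∘ₗ (pderiv i).toLinearMap

lemma aux_DbS_deg {m : ℕ} (t : Finset (Fin m)) (p : MvPolynomial (Fin m) ℝ) (d : ℕ)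
    (h : p.totalDegree ≤ d + 1) : (DbS t p).totalDegree ≤ d := by
  rw [DbS, LinearMap.sum_apply]
  refine (totalDegree_finset_sum _ _).trans (Finset.sup_le fun i _ => ?_)
  rw [LinearMap.comp_apply]
  exact aux_pd_bound i _ d (le_trans (aux_pd_bound i p d h) (Nat.le_succ _))

lemma aux_locnilp {m : ℕ} (t : Finset (Fin m)) (k : ℕ) :
    ∀ (p : MvPolynomial (Fin m) ℝ), p.totalDegree < k → (DbS t ^ k) p = 0 := by
  induction k with
  | zero => intro p hp; omega
  | succ k ih =>
    intro p hp
    rw [pow_succ, Module.End.mul_apply]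
    rcases Nat.eq_zero_or_pos k with hk | hk
    · subst hk
      rw [pow_zero, Module.End.one_apply, DbS, LinearMap.sum_apply]
      refine Finset.sum_eq_zero fun i _ => ?_
      have h0 : p.totalDegree = 0 := by omega
      rw [LinearMap.comp_apply]
      show pderiv i (pderiv i p) = 0
      rw [aux_pd_zero i p h0]; simp
    · exact ih _ (lt_of_le_of_lt (aux_DbS_deg t p (k - 1) (by omega)) (by omega))

/-- A sum of `card s` pairwise-commuting square-zero elements is nilpotent of order
`card s + 1`. -/
lemma aux_sq_sum_zero {R : Type*} [Ring R] {ι : Type*} [DecidableEq ι] (T : ι → R)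
    (hcomm : ∀ i j, Commute (T i) (T j)) (hsq : ∀ i, T i * T i = 0) (s : Finset ι) :
    (∑ i ∈ s, T i) ^ (s.card + 1) = 0 := by
  induction s using Finset.induction_on with
  | empty => simp
  | @insert a t ha ih =>
    rw [Finset.sum_insert ha, Finset.card_insert_of_notMem ha]
    have hC : Commute (T a) (∑ i ∈ t, T i) := Commute.sum_right _ _ _ fun i _ => hcomm a i
    rw [Commute.add_pow hC]
    refine Finset.sum_eq_zero fun k hk => ?_
    by_cases h2 : 2 ≤ k
    · obtain ⟨j, rfl⟩ : ∃ j, k = 2 + j := ⟨k - 2, by omega⟩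
      rw [pow_add, pow_two, hsq, zero_mul, zero_mul, zero_mul]
    · have hj : t.card + 1 + 1 - k = (t.card + 1) + (t.card + 1 + 1 - k - (t.card + 1)) := by
        omega
      rw [hj, pow_add, ih, zero_mul, mul_zero, zero_mul]

lemma aux_anti_comm {R : Type*} [Ring R] {A B C D : R}
    (hAC : A * C = -(C * A)) (hAD : A * D = -(D * A))
    (hBC : B * C = -(C * B)) (hBD : B * D = -(D * B)) :
    Commute (A * B) (C * D) := by
  have swap : ∀ (x y z : R), x * y = -(y * x) → x * (y * z) = -(y * (x * z)) :=
    fun x y z h => by rw [← mul_assoc, h, neg_mul, mul_assoc]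
  show A * B * (C * D) = C * D * (A * B)
  simp only [mul_assoc]
  rw [swap _ _ _ hBC, mul_neg, swap _ _ _ hAC, neg_neg, hBD, mul_neg, mul_neg,
    swap _ _ _ hAD, mul_neg, neg_neg]

lemma aux_anti_sq {R : Type*} [Ring R] {A B : R}
    (hAB : A * B = -(B * A)) (hA : A * A = 0) (hB : B * B = 0) :
    (A * B) * (A * B) = 0 := by
  have swap : ∀ (x y z : R), x * y = -(y * x) → x * (y * z) = -(y * (x * z)) :=
    fun x y z h => by rw [← mul_assoc, h, neg_mul, mul_assoc]
  have hBA : B * A = -(A * B) := by rw [hAB, neg_neg]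
  simp only [mul_assoc]
  rw [swap _ _ _ hBA, hB, mul_zero, neg_zero, mul_zero]

lemma aux_gd_anti (n : ℕ) (j k : Fin (2 * n)) :
    (gd n j * gd n k : Module.End ℝ (Grass n)) = -(gd n k * gd n j) := by
  refine LinearMap.ext fun x => ?_
  simp only [Module.End.mul_apply, LinearMap.neg_apply, gd]
  exact CliffordAlgebra.contractLeft_comm (Q := (0 : QuadraticForm ℝ (Fin (2*n) → ℝ))) (LinearMap.proj j) (LinearMap.proj k) x

lemma aux_gd_sq (n : ℕ) (j : Fin (2 * n)) :
    (gd n j * gd n j : Module.End ℝ (Grass n)) = 0 := by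
  refine LinearMap.ext fun x => ?_
  simp only [Module.End.mul_apply, gd, LinearMap.zero_apply]
  exact CliffordAlgebra.contractLeft_contractLeft (Q := (0 : QuadraticForm ℝ (Fin (2*n) → ℝ))) (LinearMap.proj j) x

/-- The fermionic part of the Laplacian. -/
def Gf (n : ℕ) : Module.End ℝ (Grass n) :=
  ∑ j : Fin n, gd n (idx0 n j) ∘ₗ gd n (idx1 n j)

lemma aux_Gf_pow (n : ℕ) : (Gf n) ^ (n + 1) = 0 := by
  have h := aux_sq_sum_zero (fun j : Fin n => gd n (idx0 n j) * gd n (idx1 n j))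
    (fun j k => aux_anti_comm (aux_gd_anti n _ _) (aux_gd_anti n _ _)
      (aux_gd_anti n _ _) (aux_gd_anti n _ _))
    (fun j => aux_anti_sq (aux_gd_anti n _ _) (aux_gd_sq n _) (aux_gd_sq n _))
    Finset.univ
  rw [Finset.card_univ, Fintype.card_fin] at h
  rw [Gf]
  simpa [Module.End.mul_eq_comp] using h

/-- The bosonic part of the Laplacian. -/
def Db (m : ℕ) : Module.End ℝ (Poly m) := DbS (Finset.univ : Finset (Fin m))

lemma aux_dg_comp (m n : ℕ) (j k : Fin (2 * n)) :
    dg m n j ∘ₗ dg m n k = LinearMap.lTensor (Poly m) (gd n j ∘ₗ gd n k) := by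
  rw [dg, dg, LinearMap.lTensor, ← TensorProduct.map_comp, LinearMap.comp_id]

lemma aux_dx_comp (m n : ℕ) (i : Fin m) :
    dx m n i ∘ₗ dx m n i = LinearMap.rTensor (Grass n)
      ((MvPolynomial.pderiv i).toLinearMap ∘ₗ (MvPolynomial.pderiv i).toLinearMap) := by
  rw [dx, LinearMap.rTensor, ← TensorProduct.map_comp, LinearMap.comp_id]

lemma aux_Delta_eq (m n : ℕ) : Delta m n =
    4 • LinearMap.lTensor (Poly m) (Gf n) - LinearMap.rTensor (Grass n) (Db m) := by
  rw [Delta]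
  congr 1
  · rw [Gf, ← LinearMap.coe_lTensorHom, map_sum]
    simp only [LinearMap.coe_lTensorHom]
    congr 1
    exact Finset.sum_congr rfl fun j _ => aux_dg_comp m n _ _
  · rw [Db, DbS, ← LinearMap.coe_rTensorHom, map_sum]
    simp only [LinearMap.coe_rTensorHom]
    exact Finset.sum_congr rfl fun i _ => aux_dx_comp m n i

lemma aux_eval0_one (m n : ℕ) : eval0 m n ((1 : Poly m) ⊗ₜ[ℝ] (1 : Grass n)) = 1 := by
  simp [eval0]

end Aux

/-- The super-Laplace operator `Δ : 𝒫 → 𝒫` is surjective iff `m ≠ 0`. -/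
theorem super_laplace_surjective_iff (m n : ℕ) :
    Function.Surjective (Super.Delta m n) ↔ m ≠ 0 := by
  constructor
  · -- if `m = 0` then `Δ` is nilpotent, hence not surjective
    intro hsurj hm
    subst hm
    have hD : Super.Delta 0 n = 4 • LinearMap.lTensor (Super.Poly 0) (Gf n) := by
      rw [aux_Delta_eq]
      have hDb : Db 0 = 0 := by simp [Db, DbS]
      rw [hDb, LinearMap.rTensor_zero]
      abel
    have hpow : Super.Delta 0 n ^ (n + 1) = 0 := by
      rw [hD, smul_pow, LinearMap.lTensor_pow, aux_Gf_pow, LinearMap.lTensor_zero, smul_zero]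
    have hall : ∀ k : ℕ, Function.Surjective ⇑(Super.Delta 0 n ^ k) := by
      intro k
      induction k with
      | zero => intro y; exact ⟨y, by simp⟩
      | succ k ih =>
        intro y
        obtain ⟨z, hz⟩ := ih y
        obtain ⟨w, hw⟩ := hsurj z
        exact ⟨w, by rw [pow_succ, Module.End.mul_apply, hw, hz]⟩
    obtain ⟨x, hx⟩ := hall (n + 1) ((1 : Super.Poly 0) ⊗ₜ[ℝ] (1 : Super.Grass n))
    rw [hpow, LinearMap.zero_apply] at hx
    have h10 := congrArg (Super.eval0 0 n) hx
    rw [map_zero, aux_eval0_one] at h10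
    exact zero_ne_one h10
  · intro hm
    have hm' : 0 < m := Nat.pos_of_ne_zero hm
    set i0 : Fin m := ⟨0, hm'⟩ with hi0
    set pd : Fin m → Module.End ℝ (Super.Poly m) :=
      fun i => (MvPolynomial.pderiv i).toLinearMap with hpd
    set A1 : Module.End ℝ (Super.Poly m) :=
      (MvPolynomial.basisMonomials (Fin m) ℝ).constr ℝ
        (fun s => MvPolynomial.monomial (s + Finsupp.single i0 1) (((s i0 : ℝ) + 1)⁻¹))
      with hA1
    -- `A1` is a right inverse of `∂_{x_{i0}}`
    have h_inv : pd i0 * A1 = 1 := by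
      rw [Module.End.mul_eq_comp]
      show pd i0 ∘ₗ A1 = LinearMap.id
      refine (MvPolynomial.basisMonomials (Fin m) ℝ).ext fun s => ?_
      rw [LinearMap.comp_apply, LinearMap.id_apply, hA1, Module.Basis.constr_basis]
      show MvPolynomial.pderiv i0 _ = _
      rw [MvPolynomial.pderiv_monomial, add_tsub_cancel_right]
      have h1 : (s + (Finsupp.single i0 1 : Fin m →₀ ℕ)) i0 = s i0 + 1 := by
        simp [Finsupp.add_apply]
      rw [h1, MvPolynomial.coe_basisMonomials]
      have h2 : ((s i0 : ℝ) + 1)⁻¹ * ((s i0 + 1 : ℕ) : ℝ) = 1 := by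
        push_cast
        rw [inv_mul_cancel₀]
        positivity
      rw [h2]
    -- `A1` commutes with the other derivatives
    have h_comm : ∀ i : Fin m, i ≠ i0 → Commute (pd i) A1 := by
      intro i hi
      rw [Commute, SemiconjBy, Module.End.mul_eq_comp, Module.End.mul_eq_comp]
      refine (MvPolynomial.basisMonomials (Fin m) ℝ).ext fun s => ?_
      rw [LinearMap.comp_apply, LinearMap.comp_apply, hA1, Module.Basis.constr_basis,
        MvPolynomial.coe_basisMonomials]
      show MvPolynomial.pderiv i _ = A1 (MvPolynomial.pderiv i _)
      rw [MvPolynomial.pderiv_monomial, MvPolynomial.pderiv_monomial]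
      have hsi : (s + (Finsupp.single i0 1 : Fin m →₀ ℕ)) i = s i := by
        simp [Finsupp.add_apply, Finsupp.single_apply, (Ne.symm hi)]
      rw [hsi, one_mul]
      have hmono : (MvPolynomial.monomial (s - Finsupp.single i 1) ((s i : ℕ) : ℝ))
          = ((s i : ℕ) : ℝ) • (MvPolynomial.basisMonomials (Fin m) ℝ) (s - Finsupp.single i 1) := by
        simp [MvPolynomial.coe_basisMonomials, MvPolynomial.smul_monomial]
      rw [hmono, map_smul, hA1, Module.Basis.constr_basis]
      have hexp : s + Finsupp.single i0 1 - Finsupp.single i 1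
          = s - Finsupp.single i 1 + Finsupp.single i0 1 := by
        ext a
        simp only [Finsupp.add_apply, Finsupp.tsub_apply, Finsupp.single_apply]
        split_ifs with h1 h2 <;> omega
      have hco : (s - (Finsupp.single i 1 : Fin m →₀ ℕ)) i0 = s i0 := by
        simp [Finsupp.tsub_apply, Finsupp.single_apply, hi]
      rw [hexp, hco, MvPolynomial.smul_monomial, smul_eq_mul, mul_comm]
    -- the various operators on `P m n`
    set Gl : Module.End ℝ (Super.P m n) := LinearMap.lTensor (Super.Poly m) (Gf n) with hGl
    set Db' : Module.End ℝ (Super.Poly m) := DbS (Finset.univ.erase i0) with hDb'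
    set V : Module.End ℝ (Super.P m n) := LinearMap.rTensor (Super.Grass n) Db' with hV
    set X : Module.End ℝ (Super.P m n) :=
      LinearMap.rTensor (Super.Grass n) (pd i0 * pd i0) with hX
    set J : Module.End ℝ (Super.P m n) :=
      LinearMap.rTensor (Super.Grass n) (A1 * A1) with hJ
    set N : Module.End ℝ (Super.P m n) := 4 • Gl - V with hN
    have hrT : ∀ f g : Module.End ℝ (Super.Poly m),
        LinearMap.rTensor (Super.Grass n) f * LinearMap.rTensor (Super.Grass n) g
          = LinearMap.rTensor (Super.Grass n) (f * g) := fun f g => by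
      rw [Module.End.mul_eq_comp, Module.End.mul_eq_comp, LinearMap.rTensor_comp]
    -- `Δ = N - X`
    have hsplit : Super.Delta m n = N - X := by
      rw [aux_Delta_eq, hN, hX, hV, hDb', hGl]
      have hDb : Db m = (pd i0 * pd i0) + DbS (Finset.univ.erase i0) := by
        rw [Db, DbS, ← Finset.add_sum_erase _ _ (Finset.mem_univ i0)]
        rfl
      rw [hDb, LinearMap.rTensor_add]
      abel
    -- `X * J = 1`
    have hXJ : X * J = 1 := by
      rw [hX, hJ, hrT]
      have h1 : (pd i0 * pd i0) * (A1 * A1) = 1 := by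
        rw [mul_assoc, ← mul_assoc (pd i0) A1 A1, h_inv, one_mul, h_inv]
      rw [h1]
      show LinearMap.rTensor (Super.Grass n) LinearMap.id = 1
      rw [LinearMap.rTensor_id]
      rfl
    -- `N` commutes with `J`
    have hGlrT : ∀ f : Module.End ℝ (Super.Poly m),
        Commute Gl (LinearMap.rTensor (Super.Grass n) f) := fun f => by
      rw [Commute, SemiconjBy, hGl, Module.End.mul_eq_comp, Module.End.mul_eq_comp,
        LinearMap.lTensor_comp_rTensor, LinearMap.rTensor_comp_lTensor]
    have hDb'A : Commute Db' (A1 * A1) := by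
      rw [hDb', DbS]
      refine Commute.sum_left _ _ _ fun i hi => ?_
      have hine : i ≠ i0 := (Finset.mem_erase.1 hi).1
      have hc : Commute (pd i) A1 := h_comm i hine
      have hcc : Commute ((pd i) * (pd i)) A1 := hc.mul_left hc
      show Commute ((pd i) * (pd i)) (A1 * A1)
      exact hcc.mul_right hcc
    have hGlJ : Commute Gl J := by
      rw [hJ]; exact hGlrT (A1 * A1)
    have h4GlJ : Commute (4 • Gl) J := by
      rw [nsmul_eq_mul]
      exact Commute.mul_left (Nat.cast_commute (4 : ℕ) J) hGlJ
    have hVJ : Commute V J := by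
      rw [hV, hJ, Commute, SemiconjBy, hrT, hrT, hDb'A]
    have hNJ : Commute N J := by
      rw [hN]
      exact @Commute.sub_left (Module.End ℝ (Super.P m n)) _ _ _ _ h4GlJ hVJ
    -- `(4 • Gl) ^ (n+1) = 0`
    have hUpow : (4 • Gl) ^ (n + 1) = 0 := by
      rw [smul_pow, hGl, LinearMap.lTensor_pow, aux_Gf_pow, LinearMap.lTensor_zero, smul_zero]
    -- `V` is locally nilpotent
    have hVloc : ∀ R : Super.P m n, ∃ K, ∀ k, K ≤ k → (V ^ k) R = 0 := by
      intro R
      induction R using TensorProduct.induction_on with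
      | zero => exact ⟨0, fun k _ => map_zero _⟩
      | tmul p g =>
        refine ⟨p.totalDegree + 1, fun k hk => ?_⟩
        rw [hV, LinearMap.rTensor_pow, LinearMap.rTensor_tmul, hDb',
          aux_locnilp _ k p (by omega), TensorProduct.zero_tmul]
      | add x y hx hy =>
        obtain ⟨K1, h1⟩ := hx
        obtain ⟨K2, h2⟩ := hy
        exact ⟨max K1 K2, fun k hk => by
          rw [map_add, h1 k (le_trans (le_max_left _ _) hk),
            h2 k (le_trans (le_max_right _ _) hk), add_zero]⟩
    -- `N` is locally nilpotent
    have hNloc : ∀ R : Super.P m n, ∃ K, (N ^ K) R = 0 := by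
      intro R
      obtain ⟨K, hK⟩ := hVloc R
      refine ⟨K + (n + 1), ?_⟩
      have hGlV : Commute Gl V := by rw [hV, hGl]; exact hGlrT Db'
      have hCUV : Commute (4 • Gl) V := by
        rw [nsmul_eq_mul]
        exact Commute.mul_left (Nat.cast_commute (4 : ℕ) V) hGlV
      have hsmulcomm : ∀ (r : ℝ) (a b : Module.End ℝ (Super.P m n)),
          Commute a b → Commute (r • a) b := fun r a b h => by
        rw [Commute, SemiconjBy, Module.End.mul_eq_comp, Module.End.mul_eq_comp,
          LinearMap.smul_comp, LinearMap.comp_smul]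
        exact congrArg (fun z => r • z) h.eq
      have hC : Commute (4 • Gl) ((-1 : ℝ) • V) :=
        (hsmulcomm (-1 : ℝ) V (4 • Gl) hCUV.symm).symm
      have hW : ∀ e, K ≤ e → (((-1 : ℝ) • V) ^ e) R = 0 := by
        intro e he
        rw [smul_pow, LinearMap.smul_apply, hK e he, smul_zero]
      have hNalt : N = 4 • Gl + (-1 : ℝ) • V := by
        rw [hN]
        exact (sub_eq_add_neg _ _).trans
          (congrArg (fun z => 4 • Gl + z) (neg_one_smul ℝ V).symm)
      rw [hNalt, Commute.add_pow hC, LinearMap.sum_apply]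
      refine Finset.sum_eq_zero fun k hk => ?_
      by_cases hkn : k ≤ n
      · rw [Module.End.mul_apply, Module.End.mul_apply, Module.End.natCast_apply,
          map_nsmul, hW _ (by omega), smul_zero, map_zero]
      · have hU : (4 • Gl) ^ k = 0 := by
          have h4 : (4 • Gl) ^ k = (4 • Gl) ^ (n + 1) * (4 • Gl) ^ (k - (n + 1)) := by
            rw [← pow_add]
            congr 1
            omega
          rw [h4, hUpow, zero_mul]
        rw [hU, zero_mul, zero_mul, LinearMap.zero_apply]
    -- conclusion
    intro R
    obtain ⟨K, hK⟩ := hNloc R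
    have hkey : Super.Delta m n * (∑ k ∈ Finset.range K, J ^ (k + 1) * N ^ k)
        = J ^ K * N ^ K - 1 := by
      rw [hsplit, Finset.mul_sum]
      have hterm : ∀ k, (N - X) * (J ^ (k + 1) * N ^ k)
          = (fun k => J ^ k * N ^ k) (k + 1) - (fun k => J ^ k * N ^ k) k := by
        intro k
        rw [@sub_mul (Module.End ℝ (Super.P m n)) _ N X (J ^ (k + 1) * N ^ k)]
        have e1 : N * (J ^ (k + 1) * N ^ k) = J ^ (k + 1) * N ^ (k + 1) := by
          rw [← mul_assoc, (hNJ.pow_right (k + 1)).eq, mul_assoc, ← pow_succ']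
        have e2 : X * (J ^ (k + 1) * N ^ k) = J ^ k * N ^ k := by
          rw [← mul_assoc, pow_succ', ← mul_assoc, hXJ, one_mul]
        rw [e1, e2]
      rw [Finset.sum_congr rfl fun k _ => hterm k,
        Finset.sum_range_sub (fun k => J ^ k * N ^ k)]
      simp
    refine ⟨-((∑ k ∈ Finset.range K, J ^ (k + 1) * N ^ k) R), ?_⟩
    have h2 : Super.Delta m n ((∑ k ∈ Finset.range K, J ^ (k + 1) * N ^ k) R)
        = (J ^ K * N ^ K) R - R := by
      rw [← Module.End.mul_apply, hkey, LinearMap.sub_apply, Module.End.one_apply]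
    have h3 : (J ^ K * N ^ K) R = 0 := by
      rw [Module.End.mul_apply, hK, map_zero]
    rw [map_neg, h2, h3, zero_sub, neg_neg]
end
end

section
/- Suppose the superdimension M = m − 2n is not in {0, −2, −4, …}. Let H_k ∈ ℋ_k be a spherical harmonic of degree k. Then for all integers i, j ≥ 0: if i ≤ j, Δ^{i}(x^{2j} H_k) = c_{i,j,k} · x^{2j−2i} H_k with c_{i,j,k} = 4^{i} · (j!/(j−i)!) · ∏_{r=1}^{i} (k + M/2 + j − r) (equivalently c_{i,j,k} = 4^{i} (j!/(j−i)!) Γ(k + M/2 + j)/Γ(k + M/2 + j − i)); and if i > j, Δ^{i}(x^{2j} H_k) = 0. -/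
set_option synthInstance.maxHeartbeats 1000000
set_option maxHeartbeats 1000000

open scoped TensorProduct

noncomputable section

/-!
The commutation relations `[Δ, x²] = 4𝔼 + 2M` and `[𝔼, x²] = 2x²` hold on `𝒫 = ℝ[x] ⊗ Λ`
because they split into an ordinary and a Grassmann part:
`[∑ ∂ᵢ², ∑ xᵢ²] = 4𝔼ₓ + 2m` and `[∑ ∂_{x̀_{2j-1}} ∂_{x̀_{2j}}, ∑ x̀_{2j-1} x̀_{2j}] = 𝔼_{x̀} - n`,
and `4(𝔼_{x̀} - n) + 4𝔼ₓ + 2m = 4𝔼 + 2M`. Since `x^{2t} H_k` is homogeneous of degree `k + 2t`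
and `Δ H_k = 0`, they give the lowering relation
`Δ (x^{2t+2} H_k) = 4 (t + 1) (k + M/2 + t) x^{2t} H_k`;
applying it `i` times produces `c_{i,j,k}`, and for `i > j` the chain reaches `Δ H_k = 0`.
-/

namespace Super

open Finset MvPolynomial TensorProduct

section Grassmann

variable {n : ℕ}

lemma gd_gg_mul (j k : Fin (2 * n)) (f : Grass n) :
    gd n j (gg n k * f) = (if j = k then f else 0) - gg n k * gd n j f := by
  simpa [gd, gg, Pi.single_apply] using CliffordAlgebra.contractLeft_ι_mul
    (Q := (0 : QuadraticForm ℝ (Fin (2 * n) → ℝ))) (LinearMap.proj j) (Pi.single k 1) f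

lemma gg_mul_gg (a b : Fin (2 * n)) : gg n a * gg n b = -(gg n b * gg n a) := by
  rw [eq_neg_iff_add_eq_zero]
  exact ExteriorAlgebra.ι_add_mul_swap _ _

lemma gg_mul_gg_mul (a b : Fin (2 * n)) (g : Grass n) :
    gg n a * (gg n b * g) = -(gg n b * (gg n a * g)) := by
  rw [← mul_assoc, gg_mul_gg, neg_mul, mul_assoc]

lemma gd_gg_mul_gg_mul (q a b : Fin (2 * n)) (g : Grass n) :
    gd n q (gg n a * (gg n b * g)) =
      (if q = a then gg n b * g else 0) - (if q = b then gg n a * g else 0) +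
        gg n a * (gg n b * gd n q g) := by
  rw [gd_gg_mul, gd_gg_mul, mul_sub, mul_ite, mul_zero]
  abel

@[simp] lemma idx0_inj {j l : Fin n} : idx0 n j = idx0 n l ↔ j = l := by
  simp only [idx0, Fin.ext_iff]; omega

@[simp] lemma idx1_inj {j l : Fin n} : idx1 n j = idx1 n l ↔ j = l := by
  simp only [idx1, Fin.ext_iff]; omega

@[simp] lemma idx0_ne_idx1 (j l : Fin n) : idx0 n j ≠ idx1 n l := by
  simp only [idx0, idx1, Fin.ext_iff, ne_eq]; omega

@[simp] lemma idx1_ne_idx0 (j l : Fin n) : idx1 n j ≠ idx0 n l :=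
  (idx0_ne_idx1 l j).symm

lemma sum_fin_two_mul {M : Type*} [AddCommMonoid M] (f : Fin (2 * n) → M) :
    ∑ q, f q = ∑ j, (f (idx0 n j) + f (idx1 n j)) := by
  rw [← (finProdFinEquiv.trans (finCongr (mul_comm n 2))).sum_comp, Fintype.sum_prod_type]
  refine sum_congr rfl fun j _ => ?_
  rw [Fin.sum_univ_two]
  congr 2 <;> ext <;> simp [idx0, idx1, mul_comm, add_comm]

def grassSq (n : ℕ) : Grass n := ∑ j : Fin n, gg n (idx0 n j) * gg n (idx1 n j)

lemma grassSq_mul (g : Grass n) :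
    grassSq n * g = ∑ l : Fin n, gg n (idx0 n l) * (gg n (idx1 n l) * g) := by
  simp only [grassSq, sum_mul, mul_assoc]

lemma gg_mul_grassSq_mul (q : Fin (2 * n)) (g : Grass n) :
    gg n q * (grassSq n * g) = grassSq n * (gg n q * g) := by
  simp only [grassSq_mul, mul_sum]
  refine sum_congr rfl fun l _ => ?_
  rw [gg_mul_gg_mul q, gg_mul_gg_mul q, mul_neg, neg_neg]

lemma gd_idx0_grassSq_mul (j : Fin n) (g : Grass n) :
    gd n (idx0 n j) (grassSq n * g) = gg n (idx1 n j) * g + grassSq n * gd n (idx0 n j) g := by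
  simp [grassSq_mul, gd_gg_mul_gg_mul, sum_add_distrib]

lemma gd_idx1_grassSq_mul (j : Fin n) (g : Grass n) :
    gd n (idx1 n j) (grassSq n * g) =
      -(gg n (idx0 n j) * g) + grassSq n * gd n (idx1 n j) g := by
  simp [grassSq_mul, gd_gg_mul_gg_mul, sum_add_distrib]

def grassLaplace (n : ℕ) : Module.End ℝ (Grass n) :=
  ∑ j : Fin n, gd n (idx0 n j) ∘ₗ gd n (idx1 n j)

def grassEuler (n : ℕ) : Module.End ℝ (Grass n) :=
  ∑ q : Fin (2 * n), LinearMap.mulLeft ℝ (gg n q) ∘ₗ gd n q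

lemma grassEuler_grassSq_mul (g : Grass n) :
    grassEuler n (grassSq n * g) = grassSq n * grassEuler n g + (2 : ℝ) • (grassSq n * g) := by
  simp only [grassEuler, LinearMap.sum_apply, LinearMap.comp_apply, LinearMap.mulLeft_apply]
  rw [sum_fin_two_mul, sum_fin_two_mul, mul_sum]
  conv_rhs => rw [grassSq_mul g, smul_sum, ← sum_add_distrib]
  refine sum_congr rfl fun j _ => ?_
  rw [gd_idx0_grassSq_mul, gd_idx1_grassSq_mul, mul_add, mul_add, mul_neg, gg_mul_gg_mul (idx1 n j),
    gg_mul_grassSq_mul, gg_mul_grassSq_mul, two_smul]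
  noncomm_ring

lemma grassLaplace_grassSq_mul (g : Grass n) :
    grassLaplace n (grassSq n * g) =
      grassSq n * grassLaplace n g + grassEuler n g - (n : ℝ) • g := by
  simp only [grassLaplace, grassEuler, LinearMap.sum_apply, LinearMap.comp_apply,
    LinearMap.mulLeft_apply]
  have hn : (n : ℝ) • g = ∑ _j : Fin n, g := by
    rw [sum_const, card_univ, Fintype.card_fin, Nat.cast_smul_eq_nsmul]
  rw [sum_fin_two_mul, mul_sum, hn, ← sum_add_distrib, ← sum_sub_distrib]
  refine sum_congr rfl fun j _ => ?_
  rw [gd_idx1_grassSq_mul, map_add, map_neg, gd_gg_mul, if_pos rfl, gd_idx0_grassSq_mul]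
  abel

end Grassmann

section Polynomial

variable (σ R : Type*) [Fintype σ] [CommSemiring R]

def polySq : MvPolynomial σ R := ∑ i : σ, X i * X i

def polyLaplace : Module.End R (MvPolynomial σ R) :=
  ∑ i : σ, (pderiv (R := R) i).toLinearMap ∘ₗ (pderiv i).toLinearMap

def polyEuler : Module.End R (MvPolynomial σ R) :=
  ∑ i : σ, LinearMap.mulLeft R (X i) ∘ₗ (pderiv i).toLinearMap

variable {σ R}

lemma pderiv_polySq_mul (i : σ) (p : MvPolynomial σ R) :
    pderiv i (polySq σ R * p) = (2 : R) • (X i * p) + polySq σ R * pderiv i p := by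
  classical
  have hQ : pderiv i (polySq σ R) = (2 : R) • X i := by
    simp [polySq, pderiv_X, Pi.single_apply, sum_add_distrib, two_smul]
  rw [Derivation.leibniz, hQ, smul_eq_mul, smul_eq_mul, mul_smul_comm, mul_comm p, add_comm]

lemma polyEuler_polySq_mul (p : MvPolynomial σ R) :
    polyEuler σ R (polySq σ R * p) =
      polySq σ R * polyEuler σ R p + (2 : R) • (polySq σ R * p) := by
  simp only [polyEuler, LinearMap.sum_apply, LinearMap.comp_apply, LinearMap.mulLeft_apply,
    Derivation.coeFn_coe, pderiv_polySq_mul, mul_add, sum_add_distrib, mul_sum]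
  rw [add_comm]
  congr 1
  · exact sum_congr rfl fun i _ => mul_left_comm _ _ _
  · rw [polySq, sum_mul, smul_sum]
    exact sum_congr rfl fun i _ => by rw [mul_smul_comm, mul_assoc]

lemma polyLaplace_polySq_mul (p : MvPolynomial σ R) :
    polyLaplace σ R (polySq σ R * p) = polySq σ R * polyLaplace σ R p +
      (4 : R) • polyEuler σ R p + (2 * Fintype.card σ : R) • p := by
  simp only [polyLaplace, polyEuler, LinearMap.sum_apply, LinearMap.comp_apply,
    Derivation.coeFn_coe, LinearMap.mulLeft_apply, map_add, map_smul, pderiv_polySq_mul]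
  have hcard : (2 * Fintype.card σ : R) • p = ∑ _i : σ, (2 : R) • p := by
    rw [sum_const, card_univ, ← Nat.cast_smul_eq_nsmul R, smul_smul, mul_comm]
  rw [hcard, mul_sum, smul_sum, ← sum_add_distrib, ← sum_add_distrib]
  refine sum_congr rfl fun i _ => ?_
  have hX : pderiv i (X i * p) = p + X i * pderiv i p := by
    rw [Derivation.leibniz, pderiv_X_self, smul_eq_mul, smul_eq_mul, mul_one, add_comm]
  rw [hX]
  module

end Polynomial

section Superpolynomial

variable {m n : ℕ}

lemma Delta_tmul (q : Poly m) (h : Grass n) :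
    Delta m n (q ⊗ₜ h) =
      (4 : ℝ) • (q ⊗ₜ grassLaplace n h) - polyLaplace (Fin m) ℝ q ⊗ₜ h := by
  simp [Delta, dg, dx, grassLaplace, polyLaplace, tmul_sum, sum_tmul, mul_sum,
    ofNat_smul_eq_nsmul ℝ 4]

lemma Euler_tmul (q : Poly m) (h : Grass n) :
    Euler m n (q ⊗ₜ h) = polyEuler (Fin m) ℝ q ⊗ₜ h + q ⊗ₜ grassEuler n h := by
  simp [Euler, mulX, mulG, dx, dg, polyEuler, grassEuler, Algebra.TensorProduct.tmul_mul_tmul,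
    tmul_sum, sum_tmul]

lemma xsq_mul_tmul (q : Poly m) (h : Grass n) :
    xsq m n * (q ⊗ₜ h) = q ⊗ₜ (grassSq n * h) - (polySq (Fin m) ℝ * q) ⊗ₜ h := by
  simp [xsq, grassSq, polySq, sub_mul, sum_mul, Algebra.TensorProduct.tmul_mul_tmul, sum_tmul]

lemma Euler_xsq_mul (v : P m n) :
    Euler m n (xsq m n * v) = xsq m n * Euler m n v + (2 : ℝ) • (xsq m n * v) := by
  induction v using TensorProduct.induction_on with
  | zero => simp
  | tmul q h =>
    simp only [xsq_mul_tmul, map_sub, Euler_tmul, grassEuler_grassSq_mul, polyEuler_polySq_mul,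
      mul_add, tmul_add, add_tmul, tmul_smul, ← smul_tmul', smul_sub]
    abel
  | add v w hv hw =>
    simp only [mul_add, map_add, hv, hw, smul_add]
    abel

lemma Delta_xsq_mul (v : P m n) :
    Delta m n (xsq m n * v) =
      xsq m n * Delta m n v + (4 : ℝ) • Euler m n v + (2 * Mdim m n : ℝ) • v := by
  induction v using TensorProduct.induction_on with
  | zero => simp
  | tmul q h =>
    simp only [xsq_mul_tmul, map_sub, Delta_tmul, Euler_tmul, grassLaplace_grassSq_mul,
      polyLaplace_polySq_mul, mul_sub, mul_smul_comm, tmul_add, tmul_sub, add_tmul,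
      tmul_smul, ← smul_tmul', Fintype.card_fin, Mdim]
    push_cast
    module
  | add v w hv hw =>
    simp only [mul_add, map_add, hv, hw, smul_add]
    abel

variable {k : ℕ} {H : P m n}

lemma Euler_of_mem_Hk (hH : H ∈ Hk m n k) : Euler m n H = (k : ℝ) • H := by
  have := LinearMap.mem_ker.mp (Submodule.mem_inf.mp hH).1
  rwa [LinearMap.sub_apply, LinearMap.smul_apply, LinearMap.id_apply, sub_eq_zero] at this

lemma Delta_of_mem_Hk (hH : H ∈ Hk m n k) : Delta m n H = 0 :=
  LinearMap.mem_ker.mp (Submodule.mem_inf.mp hH).2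

lemma Euler_xsq_pow_mul (hH : H ∈ Hk m n k) (t : ℕ) :
    Euler m n (xsq m n ^ t * H) = ((k : ℝ) + 2 * t) • (xsq m n ^ t * H) := by
  induction t with
  | zero => simpa using Euler_of_mem_Hk hH
  | succ t ih =>
    rw [pow_succ', mul_assoc, Euler_xsq_mul, ih, mul_smul_comm, ← add_smul]
    congr 1
    push_cast
    ring

lemma Delta_xsq_pow_succ_mul (hH : H ∈ Hk m n k) (t : ℕ) :
    Delta m n (xsq m n ^ (t + 1) * H) =
      (4 * ((t : ℝ) + 1) * (k + Mdim m n / 2 + t)) • (xsq m n ^ t * H) := by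
  induction t with
  | zero =>
    rw [zero_add, pow_one, pow_zero, one_mul, Delta_xsq_mul, Delta_of_mem_Hk hH, mul_zero,
      zero_add, Euler_of_mem_Hk hH, smul_smul, ← add_smul]
    congr 1
    push_cast
    ring
  | succ t ih =>
    rw [pow_succ' _ (t + 1), mul_assoc, Delta_xsq_mul, ih, Euler_xsq_pow_mul hH, mul_smul_comm,
      ← mul_assoc, ← pow_succ', smul_smul, ← add_smul, ← add_smul]
    congr 1
    push_cast
    ring

end Superpolynomial

section Lowering

variable {R M : Type*} [CommSemiring R] [AddCommMonoid M] [Module R M]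
  {f : Module.End R M} {v : ℕ → M} {c : ℕ → R}

lemma pow_apply_of_lowering (hf : ∀ t, f (v (t + 1)) = c t • v t) {i j : ℕ} (hij : i ≤ j) :
    (f ^ i) (v j) = (∏ r ∈ range i, c (j - 1 - r)) • v (j - i) := by
  induction i generalizing j with
  | zero => simp
  | succ i ih =>
    obtain ⟨j, rfl⟩ : ∃ j', j = j' + 1 := ⟨j - 1, by omega⟩
    rw [pow_succ, Module.End.mul_apply, hf, map_smul, ih (by omega), smul_smul,
      prod_range_succ', mul_comm, Nat.add_sub_cancel, Nat.sub_zero]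
    congr 2
    · exact prod_congr rfl fun r _ => by rw [Nat.sub_sub, add_comm]
    · rw [Nat.add_sub_add_right]

lemma pow_apply_eq_zero_of_lowering (hf : ∀ t, f (v (t + 1)) = c t • v t) (h0 : f (v 0) = 0)
    {i j : ℕ} (hji : j < i) : (f ^ i) (v j) = 0 := by
  obtain ⟨d, rfl⟩ : ∃ d, i = d + 1 + j := ⟨i - (j + 1), by omega⟩
  rw [pow_add, Module.End.mul_apply, pow_apply_of_lowering hf le_rfl, Nat.sub_self, map_smul,
    pow_succ, Module.End.mul_apply, h0, map_zero, smul_zero]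

end Lowering

lemma prod_range_four_mul_succ_mul (a : ℝ) {i j : ℕ} (hij : i ≤ j) :
    ∏ r ∈ range i, 4 * (((j - 1 - r : ℕ) : ℝ) + 1) * (a + (j - 1 - r : ℕ)) =
      4 ^ i * ((j.factorial : ℝ) / (j - i).factorial) * ∏ r ∈ range i, (a + j - (r + 1)) := by
  have hcast : ∀ r ∈ range i, ((j - 1 - r : ℕ) : ℝ) = j - (r + 1) := fun r hr => by
    rw [mem_range] at hr
    rw [Nat.sub_sub, Nat.cast_sub (by omega), Nat.cast_add, Nat.cast_one, add_comm 1]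
  have hdesc : ∏ r ∈ range i, ((j : ℝ) - r) = j.factorial / (j - i).factorial := by
    rw [eq_div_iff (by positivity), mul_comm, ← Nat.factorial_mul_descFactorial hij,
      Nat.descFactorial_eq_prod_range, Nat.cast_mul, Nat.cast_prod]
    congr 1
    exact prod_congr rfl fun r hr => by rw [Nat.cast_sub (by simp at hr; omega)]
  rw [prod_congr rfl fun r hr => by rw [hcast r hr], prod_mul_distrib, prod_mul_distrib,
    prod_const, card_range, ← hdesc]
  congr 1
  · congr 1
    exact prod_congr rfl fun r _ => by ring
  · exact prod_congr rfl fun r _ => by ring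

end Super

theorem iterated_laplace_on_fischer_pieces_general (m n : ℕ)
    (k : ℕ) (H : Super.P m n) (hH : H ∈ Super.Hk m n k) (i j : ℕ) :
    (i ≤ j →
      (Super.Delta m n ^ i) (Super.xsq m n ^ j * H) =
        ((4 : ℝ) ^ i * ((j.factorial : ℝ) / ((j - i).factorial : ℝ)) *
            ∏ r ∈ Finset.range i,
              ((k : ℝ) + (Super.Mdim m n : ℝ) / 2 + (j : ℝ) - ((r : ℝ) + 1))) •
          (Super.xsq m n ^ (j - i) * H)) ∧
    (j < i → (Super.Delta m n ^ i) (Super.xsq m n ^ j * H) = 0) := by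
  have lowering := Super.Delta_xsq_pow_succ_mul hH
  refine ⟨fun hij => ?_, fun hji => ?_⟩
  · rw [Super.pow_apply_of_lowering (v := fun t => Super.xsq m n ^ t * H) lowering hij,
      Super.prod_range_four_mul_succ_mul _ hij]
  · refine Super.pow_apply_eq_zero_of_lowering (v := fun t => Super.xsq m n ^ t * H)
      lowering ?_ hji
    simpa using Super.Delta_of_mem_Hk hH

/-- For `M ∉ {0, -2, -4, …}` and a spherical harmonic `H_k ∈ ℋ_k`:
if `i ≤ j` then `Δ^i(x^{2j} H_k) = c_{i,j,k}·x^{2j-2i} H_k` with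
`c_{i,j,k} = 4^i·(j!/(j-i)!)·∏_{r=1}^{i}(k + M/2 + j - r)`, and if `i > j` then
`Δ^i(x^{2j} H_k) = 0`. -/
theorem iterated_laplace_on_fischer_pieces (m n : ℕ)
    (hM : ∀ t : ℕ, Super.Mdim m n ≠ -(2 * (t : ℤ)))
    (k : ℕ) (H : Super.P m n) (hH : H ∈ Super.Hk m n k) (i j : ℕ) :
    (i ≤ j →
      (Super.Delta m n ^ i) (Super.xsq m n ^ j * H) =
        ((4 : ℝ) ^ i * ((j.factorial : ℝ) / ((j - i).factorial : ℝ)) *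
            ∏ r ∈ Finset.range i,
              ((k : ℝ) + (Super.Mdim m n : ℝ) / 2 + (j : ℝ) - ((r : ℝ) + 1))) •
          (Super.xsq m n ^ (j - i) * H)) ∧
    (j < i → (Super.Delta m n ^ i) (Super.xsq m n ^ j * H) = 0) :=
  iterated_laplace_on_fischer_pieces_general m n k H hH i j
end
end

section
/- For all integers k, l ≥ 1 and all spherical harmonics H_k ∈ ℋ_k, H_l ∈ ℋ_l, the superpolynomial Δ(H_k · H_l) lies in the real linear span of products P·Q with P ∈ ℋ_{k−1} and Q ∈ ℋ_{l−1}. -/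
set_option synthInstance.maxHeartbeats 1000000
set_option maxHeartbeats 1000000

open scoped TensorProduct

noncomputable section

namespace CliffordAlgebra

variable {R M : Type*} [CommRing R] [AddCommGroup M] [Module R M] {Q : QuadraticForm R M}

theorem contractLeft_mul (d : Module.Dual R M) (a b : CliffordAlgebra Q) :
    contractLeft d (a * b) = contractLeft d a * b + involute a * contractLeft d b := by
  induction a using CliffordAlgebra.induction generalizing b with
  | algebraMap r => simp [contractLeft_algebraMap_mul, contractLeft_algebraMap]
  | ι v => simp [contractLeft_ι_mul, contractLeft_ι, Algebra.smul_def, sub_eq_add_neg]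
  | mul a₁ a₂ h₁ h₂ =>
    rw [mul_assoc, h₁, h₂, h₁, map_mul]
    noncomm_ring
  | add a₁ a₂ h₁ h₂ =>
    simp only [add_mul, map_add, h₁, h₂]
    abel

theorem involute_contractLeft (d : Module.Dual R M) (x : CliffordAlgebra Q) :
    involute (contractLeft d x) = -contractLeft d (involute x) := by
  induction x using CliffordAlgebra.left_induction with
  | algebraMap r => simp [contractLeft_algebraMap]
  | add x y hx hy => simp only [map_add, hx, hy, neg_add]
  | ι_mul x v hx =>
    rw [contractLeft_ι_mul, map_mul, involute_ι, neg_mul, map_neg, contractLeft_ι_mul]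
    simp only [map_sub, map_smul, map_mul, involute_ι, hx, neg_mul, mul_neg, neg_neg]

end CliffordAlgebra

namespace MvPolynomial

variable {R σ : Type*} [CommRing R]

theorem pderiv_pderiv_comm (i j : σ) (p : MvPolynomial σ R) :
    pderiv i (pderiv j p) = pderiv j (pderiv i p) := by
  classical
  have h : ⁅pderiv i, pderiv j⁆ = (0 : Derivation R (MvPolynomial σ R) (MvPolynomial σ R)) :=
    derivation_ext fun k => by
      rw [Derivation.commutator_apply]
      simp [pderiv_X, Pi.single_apply, apply_ite (pderiv _)]
  rw [← sub_eq_zero, ← Derivation.commutator_apply, h, Derivation.zero_apply]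

end MvPolynomial

namespace Super

open CliffordAlgebra TensorProduct

def parity (m n : ℕ) : P m n →ₐ[ℝ] P m n :=
  Algebra.TensorProduct.map (AlgHom.id ℝ (Poly m)) involute

variable {m n : ℕ}

@[simp] lemma parity_tmul (p : Poly m) (w : Grass n) : parity m n (p ⊗ₜ w) = p ⊗ₜ involute w :=
  rfl

@[simp] lemma dx_tmul (i : Fin m) (p : Poly m) (w : Grass n) :
    dx m n i (p ⊗ₜ w) = MvPolynomial.pderiv i p ⊗ₜ w :=
  rfl

@[simp] lemma dg_tmul (j : Fin (2 * n)) (p : Poly m) (w : Grass n) :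
    dg m n j (p ⊗ₜ w) = p ⊗ₜ contractLeft (LinearMap.proj j) w :=
  rfl

lemma parity_parity (a : P m n) : parity m n (parity m n a) = a := by
  induction a using TensorProduct.induction_on with
  | zero => simp
  | tmul p w => simp [involute_involute]
  | add x y hx hy => simp only [map_add, hx, hy]

lemma dx_mul (i : Fin m) (a b : P m n) :
    dx m n i (a * b) = dx m n i a * b + a * dx m n i b := by
  induction a using TensorProduct.induction_on generalizing b with
  | zero => simp
  | tmul p w =>
    induction b using TensorProduct.induction_on with
    | zero => simp
    | tmul q u =>
      simp only [Algebra.TensorProduct.tmul_mul_tmul, dx_tmul, MvPolynomial.pderiv_mul, add_tmul]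
    | add x y hx hy =>
      simp only [mul_add, map_add, hx, hy]
      abel
  | add x y hx hy =>
    simp only [add_mul, map_add, hx, hy]
    abel

lemma dg_mul (j : Fin (2 * n)) (a b : P m n) :
    dg m n j (a * b) = dg m n j a * b + parity m n a * dg m n j b := by
  induction a using TensorProduct.induction_on generalizing b with
  | zero => simp
  | tmul p w =>
    induction b using TensorProduct.induction_on with
    | zero => simp
    | tmul q u =>
      simp only [Algebra.TensorProduct.tmul_mul_tmul, dg_tmul, parity_tmul, contractLeft_mul,
        tmul_add]
    | add x y hx hy =>
      simp only [mul_add, map_add, hx, hy]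
      abel
  | add x y hx hy =>
    simp only [add_mul, map_add, hx, hy]
    abel

lemma dx_dx_comm (i i' : Fin m) (a : P m n) : dx m n i (dx m n i' a) = dx m n i' (dx m n i a) :=
  LinearMap.congr_fun (f := dx m n i ∘ₗ dx m n i') (g := dx m n i' ∘ₗ dx m n i)
    (TensorProduct.ext' fun p w => by simp [MvPolynomial.pderiv_pderiv_comm]) a

lemma dx_dg_comm (i : Fin m) (j : Fin (2 * n)) (a : P m n) :
    dx m n i (dg m n j a) = dg m n j (dx m n i a) :=
  LinearMap.congr_fun (f := dx m n i ∘ₗ dg m n j) (g := dg m n j ∘ₗ dx m n i)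
    (TensorProduct.ext' fun _ _ => rfl) a

lemma dg_dg_anticomm (j j' : Fin (2 * n)) (a : P m n) :
    dg m n j (dg m n j' a) = -dg m n j' (dg m n j a) :=
  LinearMap.congr_fun (f := dg m n j ∘ₗ dg m n j') (g := -(dg m n j' ∘ₗ dg m n j))
    (TensorProduct.ext' fun p w => by
      simp only [LinearMap.comp_apply, LinearMap.neg_apply, dg_tmul]
      rw [contractLeft_comm, tmul_neg]) a

lemma dx_parity (i : Fin m) (a : P m n) : dx m n i (parity m n a) = parity m n (dx m n i a) :=
  LinearMap.congr_fun (f := dx m n i ∘ₗ (parity m n).toLinearMap)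
    (g := (parity m n).toLinearMap ∘ₗ dx m n i) (TensorProduct.ext' fun _ _ => rfl) a

lemma dg_parity (j : Fin (2 * n)) (a : P m n) :
    dg m n j (parity m n a) = -parity m n (dg m n j a) :=
  LinearMap.congr_fun (f := dg m n j ∘ₗ (parity m n).toLinearMap)
    (g := -((parity m n).toLinearMap ∘ₗ dg m n j))
    (TensorProduct.ext' fun p w => by simp [involute_contractLeft, tmul_neg]) a

lemma involute_gg (j : Fin (2 * n)) : involute (gg n j) = -gg n j :=
  involute_ι _

lemma contractLeft_gg (j j' : Fin (2 * n)) :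
    contractLeft (LinearMap.proj j) (gg n j') = if j' = j then 1 else 0 := by
  rw [gg, ExteriorAlgebra.ι, contractLeft_ι]
  rcases eq_or_ne j' j with rfl | h
  · simp
  · simp [h]

lemma dx_X_tmul_one (i i' : Fin m) :
    dx m n i ((MvPolynomial.X i' : Poly m) ⊗ₜ (1 : Grass n)) = if i' = i then 1 else 0 := by
  rcases eq_or_ne i' i with rfl | h
  · simp [Algebra.TensorProduct.one_def]
  · simp [MvPolynomial.pderiv_X_of_ne h, h]

lemma dx_one_tmul (i : Fin m) (w : Grass n) : dx m n i ((1 : Poly m) ⊗ₜ w) = 0 := by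
  simp

lemma dg_tmul_one (j : Fin (2 * n)) (p : Poly m) : dg m n j (p ⊗ₜ (1 : Grass n)) = 0 := by
  simp [contractLeft_one]

lemma dg_one_tmul_gg (j j' : Fin (2 * n)) :
    dg m n j ((1 : Poly m) ⊗ₜ gg n j') = if j' = j then 1 else 0 := by
  rw [dg_tmul, contractLeft_gg]
  split_ifs <;> simp [Algebra.TensorProduct.one_def]

lemma parity_tmul_one (p : Poly m) : parity m n (p ⊗ₜ (1 : Grass n)) = p ⊗ₜ 1 := by
  rw [parity_tmul, map_one]

/- On `P m n` the ring negation and the negation of `TensorProduct` agree only up to unfolding,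
so ring lemmas such as `neg_mul` rewrite here only with `α := P m n` given explicitly. -/
lemma parity_one_tmul_gg_mul (j : Fin (2 * n)) (b : P m n) :
    parity m n ((1 : Poly m) ⊗ₜ gg n j) * b = -((1 : Poly m) ⊗ₜ gg n j * b) := by
  rw [parity_tmul, involute_gg, tmul_neg, neg_mul (α := P m n)]

lemma Euler_apply (a : P m n) :
    Euler m n a = ∑ i : Fin m, (MvPolynomial.X i : Poly m) ⊗ₜ (1 : Grass n) * dx m n i a
      + ∑ j : Fin (2 * n), (1 : Poly m) ⊗ₜ gg n j * dg m n j a := by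
  simp [Euler, mulX, mulG, LinearMap.sum_apply]

lemma Delta_apply (a : P m n) :
    Delta m n a = 4 • ∑ j : Fin n, dg m n (idx0 n j) (dg m n (idx1 n j) a)
      - ∑ i : Fin m, dx m n i (dx m n i a) := by
  simp [Delta, LinearMap.sum_apply, Finset.mul_sum]

lemma Euler_dx (i : Fin m) (a : P m n) :
    Euler m n (dx m n i a) = dx m n i (Euler m n a) - dx m n i a := by
  have hdx : ∀ i', dx m n i (dx m n i' a) = dx m n i' (dx m n i a) := fun i' => dx_dx_comm i i' a
  simp only [Euler_apply, map_add, map_sum, dx_mul, dx_X_tmul_one, dx_one_tmul, ite_mul,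
    one_mul, zero_mul, zero_add, Finset.sum_add_distrib, Finset.sum_ite_eq', Finset.mem_univ,
    if_true, hdx, dx_dg_comm]
  abel

lemma Euler_dg (j : Fin (2 * n)) (a : P m n) :
    Euler m n (dg m n j a) = dg m n j (Euler m n a) - dg m n j a := by
  have hdg : ∀ j', (1 : Poly m) ⊗ₜ gg n j' * dg m n j (dg m n j' a)
      = -((1 : Poly m) ⊗ₜ gg n j' * dg m n j' (dg m n j a)) := fun j' => by
    rw [dg_dg_anticomm, mul_neg (α := P m n)]
  simp only [Euler_apply, map_add, map_sum, dg_mul, dg_tmul_one, dg_one_tmul_gg, parity_tmul_one,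
    parity_one_tmul_gg_mul, ite_mul, one_mul, zero_mul, zero_add, hdg,
    ← dx_dg_comm, Finset.sum_add_distrib, Finset.sum_ite_eq', Finset.mem_univ, if_true,
    Finset.sum_neg_distrib]
  abel

lemma Euler_parity (a : P m n) : Euler m n (parity m n a) = parity m n (Euler m n a) := by
  simp only [Euler_apply, map_add, map_sum, map_mul, parity_tmul_one, parity_one_tmul_gg_mul,
    dx_parity, dg_parity, mul_neg (α := P m n)]

lemma Delta_map_of_commute {T : Module.End ℝ (P m n)}
    (hx : ∀ i a, dx m n i (T a) = T (dx m n i a))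
    (hg : ∀ j j' a, dg m n j (dg m n j' (T a)) = T (dg m n j (dg m n j' a))) (a : P m n) :
    Delta m n (T a) = T (Delta m n a) := by
  simp only [Delta_apply, map_sub, map_nsmul, map_sum, hx, hg]

lemma Delta_dx (i : Fin m) (a : P m n) : Delta m n (dx m n i a) = dx m n i (Delta m n a) :=
  Delta_map_of_commute (fun i' b => dx_dx_comm i' i b)
    (fun j j' b => by rw [← dx_dg_comm, ← dx_dg_comm]) a

lemma Delta_dg (j : Fin (2 * n)) (a : P m n) : Delta m n (dg m n j a) = dg m n j (Delta m n a) :=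
  Delta_map_of_commute (fun i b => dx_dg_comm i j b)
    (fun j₁ j₂ b => by rw [dg_dg_anticomm j₂ j, map_neg, dg_dg_anticomm j₁ j, neg_neg]) a

lemma Delta_parity (a : P m n) : Delta m n (parity m n a) = parity m n (Delta m n a) :=
  Delta_map_of_commute (T := (parity m n).toLinearMap) dx_parity
    (fun j j' b => by simp only [AlgHom.toLinearMap_apply, dg_parity, map_neg, neg_neg]) a

lemma mem_Hk_iff {k : ℕ} {a : P m n} :
    a ∈ Hk m n k ↔ Euler m n a = (k : ℝ) • a ∧ Delta m n a = 0 := by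
  simp [Hk, Pk, sub_eq_zero]

lemma map_mem_Hk_of_commute {T : Module.End ℝ (P m n)}
    (hE : ∀ a, Euler m n (T a) = T (Euler m n a))
    (hΔ : ∀ a, Delta m n (T a) = T (Delta m n a)) {k : ℕ} {a : P m n} (ha : a ∈ Hk m n k) :
    T a ∈ Hk m n k := by
  rw [mem_Hk_iff] at ha ⊢
  rw [hE, hΔ, ha.1, ha.2, map_smul, map_zero]
  exact ⟨rfl, rfl⟩

lemma map_mem_Hk_of_lowering {T : Module.End ℝ (P m n)}
    (hE : ∀ a, Euler m n (T a) = T (Euler m n a) - T a)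
    (hΔ : ∀ a, Delta m n (T a) = T (Delta m n a)) {k : ℕ} {a : P m n} (ha : a ∈ Hk m n (k + 1)) :
    T a ∈ Hk m n k := by
  rw [mem_Hk_iff] at ha ⊢
  rw [hE, hΔ, ha.1, ha.2, map_smul, map_zero]
  refine ⟨?_, rfl⟩
  push_cast
  module

lemma dx_mem_Hk (i : Fin m) {k : ℕ} {a : P m n} (ha : a ∈ Hk m n (k + 1)) :
    dx m n i a ∈ Hk m n k :=
  map_mem_Hk_of_lowering (Euler_dx i) (Delta_dx i) ha

lemma dg_mem_Hk (j : Fin (2 * n)) {k : ℕ} {a : P m n} (ha : a ∈ Hk m n (k + 1)) :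
    dg m n j a ∈ Hk m n k :=
  map_mem_Hk_of_lowering (Euler_dg j) (Delta_dg j) ha

lemma parity_mem_Hk {k : ℕ} {a : P m n} (ha : a ∈ Hk m n k) : parity m n a ∈ Hk m n k :=
  map_mem_Hk_of_commute (T := (parity m n).toLinearMap) Euler_parity Delta_parity ha

lemma dg_dg_mul (j j' : Fin (2 * n)) (f g : P m n) :
    dg m n j (dg m n j' (f * g)) = dg m n j (dg m n j' f) * g + f * dg m n j (dg m n j' g)
      + (dg m n j (parity m n f) * dg m n j' g - dg m n j' (parity m n f) * dg m n j g) := by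
  have hσ : parity m n (dg m n j' f) = -dg m n j' (parity m n f) := by rw [dg_parity, neg_neg]
  rw [dg_mul j' f g, map_add, dg_mul, dg_mul, dg_parity, parity_parity, hσ,
    neg_mul (α := P m n)]
  abel

lemma dx_dx_mul (i : Fin m) (f g : P m n) :
    dx m n i (dx m n i (f * g)) = dx m n i (dx m n i f) * g + f * dx m n i (dx m n i g)
      + 2 • (dx m n i f * dx m n i g) := by
  rw [dx_mul, map_add, dx_mul, dx_mul, two_smul]
  abel

lemma Delta_mul (f g : P m n) :
    Delta m n (f * g) = Delta m n f * g + f * Delta m n g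
      + 4 • ∑ j : Fin n, (dg m n (idx0 n j) (parity m n f) * dg m n (idx1 n j) g
          - dg m n (idx1 n j) (parity m n f) * dg m n (idx0 n j) g)
      - 2 • ∑ i : Fin m, dx m n i f * dx m n i g := by
  rw [Delta_apply (f * g), Delta_apply f, Delta_apply g, sub_mul (α := P m n),
    mul_sub (α := P m n), smul_mul_assoc, mul_smul_comm, Finset.sum_mul, Finset.sum_mul,
    Finset.mul_sum, Finset.mul_sum]
  simp only [dg_dg_mul, dx_dx_mul, Finset.sum_add_distrib, smul_add, ← Finset.smul_sum]
  abel

end Super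

/-- For `k, l ≥ 1` and spherical harmonics `H_k ∈ ℋ_k`, `H_l ∈ ℋ_l`,
the superpolynomial `Δ(H_k·H_l)` lies in the span of products `P·Q` with
`P ∈ ℋ_{k-1}` and `Q ∈ ℋ_{l-1}`. -/
theorem laplace_of_product_of_harmonics (m n : ℕ) (k l : ℕ) (hk : 1 ≤ k) (hl : 1 ≤ l)
    (Hk : Super.P m n) (hHk : Hk ∈ Super.Hk m n k)
    (Hl : Super.P m n) (hHl : Hl ∈ Super.Hk m n l) :
    Super.Delta m n (Hk * Hl) ∈
      Submodule.span ℝ {p : Super.P m n |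
        ∃ u ∈ Super.Hk m n (k - 1), ∃ v ∈ Super.Hk m n (l - 1), p = u * v} := by
  obtain ⟨k, rfl⟩ := Nat.exists_eq_add_of_le' hk
  obtain ⟨l, rfl⟩ := Nat.exists_eq_add_of_le' hl
  rw [Nat.add_sub_cancel, Nat.add_sub_cancel, Super.Delta_mul, (Super.mem_Hk_iff.1 hHk).2,
    (Super.mem_Hk_iff.1 hHl).2, zero_mul, mul_zero, zero_add, zero_add]
  have mul_mem {u v} (hu : u ∈ Super.Hk m n k) (hv : v ∈ Super.Hk m n l) :
      u * v ∈ Submodule.span ℝ {p : Super.P m n |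
        ∃ u ∈ Super.Hk m n k, ∃ v ∈ Super.Hk m n l, p = u * v} :=
    Submodule.subset_span ⟨u, hu, v, hv, rfl⟩
  refine Submodule.sub_mem _ (Submodule.smul_of_tower_mem _ _ (Submodule.sum_mem _ fun j _ => ?_))
    (Submodule.smul_of_tower_mem _ _ (Submodule.sum_mem _ fun i _ => ?_))
  · have hσ := Super.parity_mem_Hk hHk
    exact Submodule.sub_mem _ (mul_mem (Super.dg_mem_Hk _ hσ) (Super.dg_mem_Hk _ hHl))
      (mul_mem (Super.dg_mem_Hk _ hσ) (Super.dg_mem_Hk _ hHl))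
  · exact mul_mem (Super.dx_mem_Hk _ hHk) (Super.dx_mem_Hk _ hHl)
end
end

section
/- (Orthogonality of spherical harmonics) Let k, l ∈ ℕ with k ≠ l. Then for all spherical harmonics H_k ∈ ℋ_k and H_l ∈ ℋ_l, ∫_SS (H_k · H_l) = 0 and ∫_SS (H_l · H_k) = 0. -/
set_option synthInstance.maxHeartbeats 1000000
set_option maxHeartbeats 1000000

open scoped TensorProduct

noncomputable section

-- ===================== AUX =====================
section Orth
open Super CliffordAlgebra

-- Clifford-level twisted Leibniz
variable {R M : Type*} [CommRing R] [AddCommGroup M] [Module R M] {Q : QuadraticForm R M}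

theorem SSOrth.contractLeft_mul' (d : Module.Dual R M) (x y : CliffordAlgebra Q) :
    contractLeft (Q := Q) d (x * y) =
      contractLeft d x * y + involute x * contractLeft d y := by
  induction x using CliffordAlgebra.induction generalizing y with
  | algebraMap r =>
      rw [contractLeft_algebraMap, zero_mul, zero_add, involute.commutes,
        ← Algebra.smul_def, ← Algebra.smul_def, map_smul]
  | ι v =>
      rw [contractLeft_ι_mul, contractLeft_ι, involute_ι, ← Algebra.smul_def, neg_mul,
        sub_eq_add_neg]
  | mul a b ha hb =>
      rw [mul_assoc, ha (b*y), hb y, ha b, map_mul involute a b, add_mul, mul_add, mul_assoc,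
        mul_assoc, mul_assoc]
      abel
  | add a b ha hb =>
      rw [map_add, add_mul, map_add, map_add, add_mul, add_mul, ha, hb]
      abel

theorem SSOrth.involute_contractLeft' (d : Module.Dual R M) (x : CliffordAlgebra Q) :
    involute (contractLeft (Q := Q) d x) = - contractLeft d (involute x) := by
  induction x using CliffordAlgebra.induction with
  | algebraMap r => simp [contractLeft_algebraMap]
  | ι v => simp [contractLeft_ι]
  | mul a b ha hb =>
      rw [SSOrth.contractLeft_mul', map_add, map_mul, map_mul, ha, hb, involute_involute,
        map_mul, SSOrth.contractLeft_mul', neg_add, neg_mul, mul_neg, involute_involute]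
  | add a b ha hb => simp [ha, hb]; abel

namespace SSOrth
variable {m n : ℕ}

/-- the parity operator -/
def eps (m n : ℕ) : Module.End ℝ (P m n) :=
  TensorProduct.map LinearMap.id
    (involute (Q := (0 : QuadraticForm ℝ (Fin (2*n) → ℝ)))).toLinearMap

@[simp] lemma eps_tmul (p : Poly m) (w : Grass n) :
    eps m n (p ⊗ₜ w) = p ⊗ₜ involute w := rfl

@[simp] lemma dx_tmul (i : Fin m) (p : Poly m) (w : Grass n) :
    dx m n i (p ⊗ₜ w) = MvPolynomial.pderiv i p ⊗ₜ w := rfl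

@[simp] lemma dg_tmul (j : Fin (2*n)) (p : Poly m) (w : Grass n) :
    dg m n j (p ⊗ₜ w) = p ⊗ₜ contractLeft (LinearMap.proj j) w := rfl

lemma tmul_mul_tmul' (p q : Poly m) (w v : Grass n) :
    (p ⊗ₜ w : P m n) * (q ⊗ₜ v) = (p * q) ⊗ₜ (w * v) :=
  Algebra.TensorProduct.tmul_mul_tmul (A := Poly m) (B := Grass n) p q w v

lemma eps_mul (f g : P m n) : eps m n (f * g) = eps m n f * eps m n g := by
  induction f using TensorProduct.induction_on with
  | zero => simp
  | tmul p w =>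
    induction g using TensorProduct.induction_on with
    | zero => simp
    | tmul q v => simp [tmul_mul_tmul']
    | add g1 g2 h1 h2 => simp only [mul_add, map_add, h1, h2]
  | add f1 f2 h1 h2 => simp only [add_mul, map_add, h1, h2]

lemma eps_eps (f : P m n) : eps m n (eps m n f) = f := by
  induction f using TensorProduct.induction_on with
  | zero => simp
  | tmul p w => simp
  | add f1 f2 h1 h2 => simp only [map_add, h1, h2]

lemma dx_mul (i : Fin m) (f g : P m n) :
    dx m n i (f * g) = dx m n i f * g + f * dx m n i g := by
  induction f using TensorProduct.induction_on with
  | zero => simp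
  | tmul p w =>
    induction g using TensorProduct.induction_on with
    | zero => simp
    | tmul q v => simp [tmul_mul_tmul', MvPolynomial.pderiv_mul, TensorProduct.add_tmul, mul_comm, add_comm]
    | add g1 g2 h1 h2 => simp only [mul_add, map_add, h1, h2]; abel
  | add f1 f2 h1 h2 => simp only [add_mul, map_add, h1, h2]; abel

lemma dg_mul (j : Fin (2*n)) (f g : P m n) :
    dg m n j (f * g) = dg m n j f * g + eps m n f * dg m n j g := by
  induction f using TensorProduct.induction_on with
  | zero => simp
  | tmul p w =>
    induction g using TensorProduct.induction_on with
    | zero => simp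
    | tmul q v =>
        simp [tmul_mul_tmul', SSOrth.contractLeft_mul' (Q := (0 : QuadraticForm ℝ (Fin (2*n) → ℝ))),
          TensorProduct.tmul_add, mul_comm p q]
    | add g1 g2 h1 h2 => simp only [mul_add, map_add, h1, h2]; abel
  | add f1 f2 h1 h2 => simp only [add_mul, map_add, h1, h2]; abel

lemma pderiv_comm (i a : Fin m) (p : Poly m) :
    MvPolynomial.pderiv i (MvPolynomial.pderiv a p) =
      MvPolynomial.pderiv a (MvPolynomial.pderiv i p) := by
  induction p using MvPolynomial.induction_on with
  | C c => simp
  | add p q hp hq => simp [hp, hq]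
  | mul_X p s hp =>
      simp only [MvPolynomial.pderiv_mul, map_add, hp, MvPolynomial.pderiv_X, Pi.single_apply,
        apply_ite (MvPolynomial.pderiv i), apply_ite (MvPolynomial.pderiv a),
        MvPolynomial.pderiv_one, map_zero, ite_self, mul_zero, add_zero]
      ring

lemma dx_dx (i a : Fin m) (f : P m n) : dx m n i (dx m n a f) = dx m n a (dx m n i f) := by
  induction f using TensorProduct.induction_on with
  | zero => simp
  | tmul p w => simp [pderiv_comm]
  | add f1 f2 h1 h2 => simp [h1, h2]

lemma dx_dg (i : Fin m) (j : Fin (2*n)) (f : P m n) :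
    dx m n i (dg m n j f) = dg m n j (dx m n i f) := by
  induction f using TensorProduct.induction_on with
  | zero => simp
  | tmul p w => rfl
  | add f1 f2 h1 h2 => simp [h1, h2]

lemma dg_dg (a b : Fin (2*n)) (f : P m n) :
    dg m n a (dg m n b f) = - dg m n b (dg m n a f) := by
  induction f using TensorProduct.induction_on with
  | zero => simp
  | tmul p w =>
      rw [dg_tmul, dg_tmul, contractLeft_comm, dg_tmul, dg_tmul, TensorProduct.tmul_neg]
  | add f1 f2 h1 h2 => simp [h1, h2]; abel

lemma eps_dx (i : Fin m) (f : P m n) : eps m n (dx m n i f) = dx m n i (eps m n f) := by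
  induction f using TensorProduct.induction_on with
  | zero => simp
  | tmul p w => simp
  | add f1 f2 h1 h2 => simp [h1, h2]

lemma dg_eps (j : Fin (2*n)) (f : P m n) : dg m n j (eps m n f) = - eps m n (dg m n j f) := by
  induction f using TensorProduct.induction_on with
  | zero => simp
  | tmul p w =>
      simp [SSOrth.involute_contractLeft' (Q := (0 : QuadraticForm ℝ (Fin (2*n) → ℝ))),
        TensorProduct.tmul_neg]
  | add f1 f2 h1 h2 => simp [h1, h2]; abel

lemma eps_dg (j : Fin (2*n)) (f : P m n) : eps m n (dg m n j f) = - dg m n j (eps m n f) := by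
  rw [dg_eps]; simp

-- generators
lemma dx_X (i a : Fin m) :
    dx m n i ((MvPolynomial.X a : Poly m) ⊗ₜ (1 : Grass n)) =
      if a = i then (1 : P m n) else 0 := by
  by_cases h : a = i
  · subst h; simp [MvPolynomial.pderiv_X_self, Algebra.TensorProduct.one_def]
  · simp [h, MvPolynomial.pderiv_X_of_ne h, TensorProduct.zero_tmul]

lemma dx_gg (i : Fin m) (b : Fin (2*n)) :
    dx m n i ((1 : Poly m) ⊗ₜ gg n b) = 0 := by
  simp [MvPolynomial.pderiv_one, TensorProduct.zero_tmul]

lemma dg_X (j : Fin (2*n)) (a : Fin m) :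
    dg m n j ((MvPolynomial.X a : Poly m) ⊗ₜ (1 : Grass n)) = 0 := by
  simp [contractLeft_one]

lemma dg_gg (j b : Fin (2*n)) :
    dg m n j ((1 : Poly m) ⊗ₜ gg n b) = if b = j then (1 : P m n) else 0 := by
  rw [dg_tmul, gg, contractLeft_ι]
  by_cases h : b = j
  · subst h
    simp [Pi.single_apply, Algebra.TensorProduct.one_def]
  · simp [LinearMap.proj, Pi.single_apply, h]

lemma eps_X (a : Fin m) :
    eps m n ((MvPolynomial.X a : Poly m) ⊗ₜ (1 : Grass n)) =
      (MvPolynomial.X a : Poly m) ⊗ₜ (1 : Grass n) := by simp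

lemma eps_gg (b : Fin (2*n)) :
    eps m n ((1 : Poly m) ⊗ₜ gg n b) = - ((1 : Poly m) ⊗ₜ gg n b) := by
  simp [gg, involute_ι, TensorProduct.tmul_neg]

lemma map_sum' (T : Module.End ℝ (P m n)) {ι : Type*} (s : Finset ι) (g : ι → P m n) :
    T (∑ x ∈ s, g x) = ∑ x ∈ s, T (g x) :=
  map_sum T g s

lemma map_nsmul' (T : Module.End ℝ (P m n)) (c : ℕ) (x : P m n) : T (c • x) = c • T x :=
  map_nsmul T c x

lemma euler_apply (f : P m n) :
    Euler m n f = ∑ i : Fin m, ((MvPolynomial.X i : Poly m) ⊗ₜ (1:Grass n)) * dx m n i f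
      + ∑ j : Fin (2*n), ((1:Poly m) ⊗ₜ gg n j) * dg m n j f := by
  simp [Euler, mulX, mulG, LinearMap.sum_apply, LinearMap.add_apply, LinearMap.mulLeft_apply]

lemma euler_dx (i : Fin m) (f : P m n) :
    Euler m n (dx m n i f) = dx m n i (Euler m n f) - dx m n i f := by
  rw [euler_apply (dx m n i f), euler_apply f, map_add, map_sum', map_sum']
  have h1 : ∀ a : Fin m,
      dx m n i (((MvPolynomial.X a : Poly m) ⊗ₜ (1:Grass n) : P m n) * dx m n a f)
        = (if a = i then dx m n a f else 0)
          + ((MvPolynomial.X a : Poly m) ⊗ₜ (1:Grass n) : P m n) * dx m n a (dx m n i f) := by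
    intro a
    rw [dx_mul, dx_X, dx_dx i a, ite_mul, one_mul, zero_mul]
  have h2 : ∀ b : Fin (2*n),
      dx m n i ((((1:Poly m) ⊗ₜ gg n b) : P m n) * dg m n b f)
        = (((1:Poly m) ⊗ₜ gg n b) : P m n) * dg m n b (dx m n i f) := by
    intro b
    rw [dx_mul, dx_gg, zero_mul, zero_add, dx_dg]
  simp only [h1, h2, Finset.sum_add_distrib, Finset.sum_ite_eq' Finset.univ i,
    Finset.mem_univ, if_true]
  abel

lemma euler_dg (j : Fin (2*n)) (f : P m n) :
    Euler m n (dg m n j f) = dg m n j (Euler m n f) - dg m n j f := by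
  rw [euler_apply (dg m n j f), euler_apply f, map_add, map_sum', map_sum']
  have h1 : ∀ a : Fin m,
      dg m n j (((MvPolynomial.X a : Poly m) ⊗ₜ (1:Grass n) : P m n) * dx m n a f)
        = ((MvPolynomial.X a : Poly m) ⊗ₜ (1:Grass n) : P m n) * dx m n a (dg m n j f) := by
    intro a
    rw [dg_mul, dg_X, zero_mul, zero_add, eps_X, dx_dg]
  have h2 : ∀ b : Fin (2*n),
      dg m n j ((((1:Poly m) ⊗ₜ gg n b) : P m n) * dg m n b f)
        = (if b = j then dg m n b f else 0)
          + (((1:Poly m) ⊗ₜ gg n b) : P m n) * dg m n b (dg m n j f) := by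
    intro b
    rw [dg_mul, dg_gg, eps_gg, ite_mul, one_mul, zero_mul, dg_dg j b,
      neg_mul_neg (((1:Poly m) ⊗ₜ gg n b) : P m n) (dg m n b (dg m n j f))]
  simp only [h1, h2, Finset.sum_add_distrib, Finset.sum_ite_eq' Finset.univ j,
    Finset.mem_univ, if_true]
  abel

lemma euler_eps (f : P m n) : Euler m n (eps m n f) = eps m n (Euler m n f) := by
  rw [euler_apply (eps m n f), euler_apply f, map_add, map_sum', map_sum']
  congr 1
  · refine Finset.sum_congr rfl fun a _ => ?_
    rw [eps_mul, eps_X, eps_dx]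
  · refine Finset.sum_congr rfl fun b _ => ?_
    rw [eps_mul, eps_gg, eps_dg,
      neg_mul_neg (((1:Poly m) ⊗ₜ gg n b) : P m n) (dg m n b (eps m n f))]

lemma delta_apply (f : P m n) :
    Delta m n f = 4 • ∑ j : Fin n, dg m n (idx0 n j) (dg m n (idx1 n j) f)
      - ∑ i : Fin m, dx m n i (dx m n i f) := by
  simp [Delta, LinearMap.sub_apply, LinearMap.smul_apply, LinearMap.sum_apply,
    Finset.mul_sum]

lemma delta_dx (i : Fin m) (f : P m n) :
    Delta m n (dx m n i f) = dx m n i (Delta m n f) := by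
  rw [delta_apply (dx m n i f), delta_apply f, map_sub, map_nsmul', map_sum', map_sum']
  have h1 : ∀ j : Fin n, dx m n i (dg m n (idx0 n j) (dg m n (idx1 n j) f))
      = dg m n (idx0 n j) (dg m n (idx1 n j) (dx m n i f)) := fun j => by
    rw [dx_dg, dx_dg]
  have h2 : ∀ a : Fin m, dx m n i (dx m n a (dx m n a f))
      = dx m n a (dx m n a (dx m n i f)) := fun a => by
    rw [dx_dx i a (dx m n a f), dx_dx i a f]
  rw [Finset.sum_congr rfl fun j _ => h1 j, Finset.sum_congr rfl fun a _ => h2 a]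

lemma delta_dg (j : Fin (2*n)) (f : P m n) :
    Delta m n (dg m n j f) = dg m n j (Delta m n f) := by
  rw [delta_apply (dg m n j f), delta_apply f, map_sub, map_nsmul', map_sum', map_sum']
  have h1 : ∀ a : Fin n, dg m n j (dg m n (idx0 n a) (dg m n (idx1 n a) f))
      = dg m n (idx0 n a) (dg m n (idx1 n a) (dg m n j f)) := fun a => by
    rw [dg_dg j (idx0 n a) (dg m n (idx1 n a) f), dg_dg j (idx1 n a) f, map_neg, neg_neg]
  have h2 : ∀ a : Fin m, dg m n j (dx m n a (dx m n a f))
      = dx m n a (dx m n a (dg m n j f)) := fun a => by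
    rw [← dx_dg, ← dx_dg]
  rw [Finset.sum_congr rfl fun a _ => h1 a, Finset.sum_congr rfl fun a _ => h2 a]

lemma delta_eps (f : P m n) : Delta m n (eps m n f) = eps m n (Delta m n f) := by
  rw [delta_apply (eps m n f), delta_apply f, map_sub, map_nsmul', map_sum', map_sum']
  have h1 : ∀ a : Fin n, eps m n (dg m n (idx0 n a) (dg m n (idx1 n a) f))
      = dg m n (idx0 n a) (dg m n (idx1 n a) (eps m n f)) := fun a => by
    rw [dg_eps (idx1 n a) f, map_neg, dg_eps (idx0 n a), neg_neg]
  have h2 : ∀ a : Fin m, eps m n (dx m n a (dx m n a f))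
      = dx m n a (dx m n a (eps m n f)) := fun a => by
    rw [eps_dx, eps_dx]
  rw [Finset.sum_congr rfl fun a _ => (h1 a).symm, Finset.sum_congr rfl fun a _ => (h2 a).symm]

variable {f : P m n} {γ : ℝ}

lemma eigen_dx (h : Euler m n f = γ • f) (i : Fin m) :
    Euler m n (dx m n i f) = (γ - 1) • dx m n i f := by
  rw [euler_dx, h, map_smul, sub_smul γ 1 (dx m n i f), one_smul]

lemma eigen_dg (h : Euler m n f = γ • f) (j : Fin (2*n)) :
    Euler m n (dg m n j f) = (γ - 1) • dg m n j f := by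
  rw [euler_dg, h, map_smul, sub_smul γ 1 (dg m n j f), one_smul]

lemma eigen_eps (h : Euler m n f = γ • f) :
    Euler m n (eps m n f) = γ • eps m n f := by
  rw [euler_eps, h, map_smul]

lemma eigen_delta (h : Euler m n f = γ • f) :
    Euler m n (Delta m n f) = (γ - 2) • Delta m n f := by
  have hdgdg : ∀ a b : Fin (2*n),
      Euler m n (dg m n a (dg m n b f)) = (γ-2) • dg m n a (dg m n b f) := by
    intro a b
    have := eigen_dg (eigen_dg h b) a
    rw [sub_sub] at this
    norm_num at this
    convert this using 2
  have hdxdx : ∀ i a : Fin m,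
      Euler m n (dx m n i (dx m n a f)) = (γ-2) • dx m n i (dx m n a f) := by
    intro i a
    have := eigen_dx (eigen_dx h a) i
    rw [sub_sub] at this
    norm_num at this
    convert this using 2
  rw [delta_apply, map_sub, map_nsmul', map_sum', map_sum',
    Finset.sum_congr rfl (fun j _ => hdgdg _ _), Finset.sum_congr rfl (fun i _ => hdxdx _ _),
    ← Finset.smul_sum, ← Finset.smul_sum, smul_comm (4:ℕ) (γ-2), ← smul_sub]

lemma harm_dx (h : Delta m n f = 0) (i : Fin m) : Delta m n (dx m n i f) = 0 := by
  rw [delta_dx, h, map_zero]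

lemma harm_dg (h : Delta m n f = 0) (j : Fin (2*n)) : Delta m n (dg m n j f) = 0 := by
  rw [delta_dg, h, map_zero]

lemma harm_eps (h : Delta m n f = 0) : Delta m n (eps m n f) = 0 := by
  rw [delta_eps, h, map_zero]


lemma dgdg_mul (a b : Fin (2*n)) (f g : P m n) :
    dg m n a (dg m n b (f * g)) =
      dg m n a (dg m n b f) * g + f * dg m n a (dg m n b g)
      + (eps m n (dg m n b f) * dg m n a g - eps m n (dg m n a f) * dg m n b g) := by
  rw [dg_mul, map_add, dg_mul, dg_mul, dg_eps, eps_eps,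
    neg_mul (eps m n (dg m n a f)) (dg m n b g)]
  abel

lemma dxdx_mul (i : Fin m) (f g : P m n) :
    dx m n i (dx m n i (f * g)) =
      dx m n i (dx m n i f) * g + f * dx m n i (dx m n i g)
      + 2 • (dx m n i f * dx m n i g) := by
  rw [dx_mul, map_add, dx_mul, dx_mul, two_smul]
  abel

lemma delta_mul (f g : P m n) :
    Delta m n (f * g) = Delta m n f * g + f * Delta m n g
      + 4 • ∑ j : Fin n, (eps m n (dg m n (idx1 n j) f) * dg m n (idx0 n j) g
          - eps m n (dg m n (idx0 n j) f) * dg m n (idx1 n j) g)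
      - 2 • ∑ i : Fin m, dx m n i f * dx m n i g := by
  rw [delta_apply (f*g), delta_apply f, delta_apply g]
  simp only [dgdg_mul, dxdx_mul, Finset.sum_add_distrib, smul_add, sub_mul, smul_mul_assoc,
    mul_smul_comm, Finset.sum_mul, Finset.mul_sum, mul_sub, ← Finset.smul_sum, smul_sub]
  abel

def evalA (m n : ℕ) : P m n →ₐ[ℝ] ℝ :=
  Algebra.TensorProduct.lift (MvPolynomial.aeval fun _ : Fin m => (0:ℝ))
    ExteriorAlgebra.algebraMapInv (fun x y => Commute.all _ _)

lemma eval0_tmul (p : Poly m) (w : Grass n) :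
    eval0 m n (p ⊗ₜ w) = MvPolynomial.aeval (fun _ : Fin m => (0:ℝ)) p *
      ExteriorAlgebra.algebraMapInv w := by
  simp [eval0, smul_eq_mul]

lemma eval0_eq_evalA (f : P m n) : eval0 m n f = evalA m n f := by
  induction f using TensorProduct.induction_on with
  | zero => simp
  | tmul p w => rw [eval0_tmul]; rw [evalA, Algebra.TensorProduct.lift_tmul]
  | add f1 f2 h1 h2 => rw [map_add, map_add, h1, h2]

lemma eval0_mul (f g : P m n) : eval0 m n (f * g) = eval0 m n f * eval0 m n g := by
  rw [eval0_eq_evalA, eval0_eq_evalA, eval0_eq_evalA, map_mul]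

lemma eval0_X (a : Fin m) :
    eval0 m n ((MvPolynomial.X a : Poly m) ⊗ₜ (1 : Grass n)) = 0 := by
  simp [eval0_tmul]

lemma eval0_gg (b : Fin (2*n)) : eval0 m n ((1 : Poly m) ⊗ₜ gg n b) = 0 := by
  simp [eval0_tmul, gg, ExteriorAlgebra.algebraMapInv, ExteriorAlgebra.lift_ι_apply]

lemma eval0_euler_eq_zero (f : P m n) : eval0 m n (Euler m n f) = 0 := by
  rw [euler_apply, map_add, map_sum, map_sum]
  simp [eval0_mul, eval0_X, eval0_gg]

lemma eval0_eigen (h : Euler m n f = γ • f) (hγ : γ ≠ 0) : eval0 m n f = 0 := by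
  have h0 := eval0_euler_eq_zero (m := m) (n := n) f
  rw [h, map_smul, smul_eq_mul] at h0
  exact (mul_eq_zero.mp h0).resolve_left hγ

def Good (m n : ℕ) : Set (P m n) :=
  {w | ∃ u v, ∃ γ δ : ℝ, w = u * v ∧ Euler m n u = γ • u ∧ Euler m n v = δ • v ∧
    ((Delta m n u = 0 ∧ δ < γ) ∨ (Delta m n v = 0 ∧ γ < δ))}

lemma mul_mem_good {u v : P m n} {γ δ : ℝ} (hu : Euler m n u = γ • u)
    (hv : Euler m n v = δ • v)
    (hc : (Delta m n u = 0 ∧ δ < γ) ∨ (Delta m n v = 0 ∧ γ < δ)) : u * v ∈ Good m n :=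
  ⟨u, v, γ, δ, rfl, hu, hv, hc⟩

lemma eval0_good {w : P m n} (hw : w ∈ Good m n) : eval0 m n w = 0 := by
  obtain ⟨u, v, γ, δ, rfl, hu, hv, hcase⟩ := hw
  rw [eval0_mul]
  rcases hcase with ⟨_, hlt⟩ | ⟨_, hlt⟩
  · rcases eq_or_ne γ 0 with h0 | h0
    · rw [eval0_eigen hv (by rw [h0] at hlt; exact ne_of_lt hlt), mul_zero]
    · rw [eval0_eigen hu h0, zero_mul]
  · rcases eq_or_ne δ 0 with h0 | h0
    · rw [eval0_eigen hu (by rw [h0] at hlt; exact ne_of_lt hlt), zero_mul]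
    · rw [eval0_eigen hv h0, mul_zero]

lemma delta_good {w : P m n} (hw : w ∈ Good m n) :
    Delta m n w ∈ Submodule.span ℝ (Good m n) := by
  obtain ⟨u, v, γ, δ, rfl, hu, hv, hcase⟩ := hw
  rw [delta_mul]
  rcases hcase with ⟨hD, hlt⟩ | ⟨hD, hlt⟩
  · rw [hD, zero_mul, zero_add]
    refine Submodule.sub_mem _ (Submodule.add_mem _ ?_ ?_) ?_
    · exact Submodule.subset_span
        (mul_mem_good hu (eigen_delta hv) (Or.inl ⟨hD, by linarith⟩))
    · refine nsmul_mem (Submodule.sum_mem _ fun j _ => Submodule.sub_mem _ ?_ ?_) 4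
      · exact Submodule.subset_span (mul_mem_good (eigen_eps (eigen_dg hu _))
          (eigen_dg hv _) (Or.inl ⟨harm_eps (harm_dg hD _), by linarith⟩))
      · exact Submodule.subset_span (mul_mem_good (eigen_eps (eigen_dg hu _))
          (eigen_dg hv _) (Or.inl ⟨harm_eps (harm_dg hD _), by linarith⟩))
    · refine nsmul_mem (Submodule.sum_mem _ fun i _ => ?_) 2
      exact Submodule.subset_span (mul_mem_good (eigen_dx hu _) (eigen_dx hv _)
        (Or.inl ⟨harm_dx hD _, by linarith⟩))
  · rw [hD, mul_zero, add_zero]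
    refine Submodule.sub_mem _ (Submodule.add_mem _ ?_ ?_) ?_
    · exact Submodule.subset_span
        (mul_mem_good (eigen_delta hu) hv (Or.inr ⟨hD, by linarith⟩))
    · refine nsmul_mem (Submodule.sum_mem _ fun j _ => Submodule.sub_mem _ ?_ ?_) 4
      · exact Submodule.subset_span (mul_mem_good (eigen_eps (eigen_dg hu _))
          (eigen_dg hv _) (Or.inr ⟨harm_dg hD _, by linarith⟩))
      · exact Submodule.subset_span (mul_mem_good (eigen_eps (eigen_dg hu _))
          (eigen_dg hv _) (Or.inr ⟨harm_dg hD _, by linarith⟩))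
    · refine nsmul_mem (Submodule.sum_mem _ fun i _ => ?_) 2
      exact Submodule.subset_span (mul_mem_good (eigen_dx hu _) (eigen_dx hv _)
        (Or.inr ⟨harm_dx hD _, by linarith⟩))

lemma delta_span {w : P m n} (hw : w ∈ Submodule.span ℝ (Good m n)) :
    Delta m n w ∈ Submodule.span ℝ (Good m n) := by
  induction hw using Submodule.span_induction with
  | mem x hx => exact delta_good hx
  | zero => rw [map_zero]; exact Submodule.zero_mem _
  | add x y _ _ hx hy => rw [map_add]; exact Submodule.add_mem _ hx hy
  | smul c x _ hx => rw [map_smul]; exact Submodule.smul_mem _ c hx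

lemma pow_delta_span (s : ℕ) {w : P m n} (hw : w ∈ Submodule.span ℝ (Good m n)) :
    (Delta m n ^ s) w ∈ Submodule.span ℝ (Good m n) := by
  induction s generalizing w with
  | zero => simpa using hw
  | succ s ih =>
      rw [pow_succ, Module.End.mul_apply]
      exact ih (delta_span hw)

lemma SS_eq_zero {u v : P m n} {γ δ : ℝ} (hne : γ ≠ δ)
    (hu : Euler m n u = γ • u) (hv : Euler m n v = δ • v)
    (hDu : Delta m n u = 0) (hDv : Delta m n v = 0) : SS m n (u * v) = 0 := by
  have hg : u * v ∈ Submodule.span ℝ (Good m n) := by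
    refine Submodule.subset_span (mul_mem_good hu hv ?_)
    rcases hne.lt_or_gt with h | h
    · exact Or.inr ⟨hDv, h⟩
    · exact Or.inl ⟨hDu, h⟩
  have hle : Submodule.span ℝ (Good m n) ≤ LinearMap.ker (eval0 m n) :=
    Submodule.span_le.2 fun w hw => LinearMap.mem_ker.2 (eval0_good hw)
  have hz : ∀ s : ℕ, eval0 m n ((Delta m n ^ s) (u * v)) = 0 := fun s =>
    LinearMap.mem_ker.1 (hle (pow_delta_span s hg))
  unfold Super.SS
  simp [hz]

end SSOrth
end Orth

/-- Orthogonality: spherical harmonics of different degrees are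
orthogonal with respect to the supersphere integral. -/
theorem orthogonality_of_spherical_harmonics (m n : ℕ) (k l : ℕ) (hkl : k ≠ l)
    (Hk : Super.P m n) (hHk : Hk ∈ Super.Hk m n k)
    (Hl : Super.P m n) (hHl : Hl ∈ Super.Hk m n l) :
    Super.SS m n (Hk * Hl) = 0 ∧ Super.SS m n (Hl * Hk) = 0 := by
  obtain ⟨hk1, hk2⟩ := Submodule.mem_inf.mp hHk
  obtain ⟨hl1, hl2⟩ := Submodule.mem_inf.mp hHl
  have ek : Super.Euler m n Hk = (k : ℝ) • Hk := by
    have h := LinearMap.mem_ker.mp hk1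
    rw [LinearMap.sub_apply, LinearMap.smul_apply, LinearMap.id_apply, sub_eq_zero] at h
    exact h
  have el : Super.Euler m n Hl = (l : ℝ) • Hl := by
    have h := LinearMap.mem_ker.mp hl1
    rw [LinearMap.sub_apply, LinearMap.smul_apply, LinearMap.id_apply, sub_eq_zero] at h
    exact h
  have dk : Super.Delta m n Hk = 0 := LinearMap.mem_ker.mp hk2
  have dl : Super.Delta m n Hl = 0 := LinearMap.mem_ker.mp hl2
  have hne : (k : ℝ) ≠ (l : ℝ) := by exact_mod_cast hkl
  exact ⟨SSOrth.SS_eq_zero hne ek el dk dl, SSOrth.SS_eq_zero hne.symm el ek dl dk⟩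
end
end

section
/- (Green's theorem, first form, scalar part) For every superpolynomial R ∈ 𝒫, ∫_SS (𝔼 R) = −∫_SB (Δ R). -/
set_option synthInstance.maxHeartbeats 1000000
set_option maxHeartbeats 1000000

open scoped TensorProduct

noncomputable section

/-!
Every `∂ = ∂_{x_i}` or `∂_{x̀_j}` satisfies `∂𝔼 - 𝔼∂ = ∂`; since commutation with `𝔼` is a
derivation, the quadratic operator `Δ` satisfies `Δ𝔼 - 𝔼Δ = 2Δ`, hence `Δᵏ𝔼 - 𝔼Δᵏ = 2kΔᵏ`.
Every term of `𝔼` has a variable on the left, so `(𝔼S)(0) = 0` and therefore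
`(Δᵏ𝔼R)(0) = 2k (ΔᵏR)(0)`. The Pizzetti series of `∫_SS 𝔼R` thus loses its `k = 0` term, and after
the shift `k ↦ k + 1` the identity `2(k + 1) c^SS_{k+1} = -c^SB_k` between the coefficients (their
`Γ` arguments agree) matches it term by term with `-∫_SB ΔR`.
-/

section Commutator

variable {K V : Type*} [CommRing K] [AddCommGroup V] [Module K V]

def commEigenspace (e : Module.End K V) (c : K) : Submodule K (Module.End K V) :=
  Module.End.eigenspace (LinearMap.mulRight K e - LinearMap.mulLeft K e) c

theorem mem_commEigenspace_iff {e a : Module.End K V} {c : K} :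
    a ∈ commEigenspace e c ↔ a * e - e * a = c • a := by
  simp [commEigenspace]

theorem mul_mem_commEigenspace {e a b : Module.End K V} {c d : K}
    (ha : a ∈ commEigenspace e c) (hb : b ∈ commEigenspace e d) :
    a * b ∈ commEigenspace e (c + d) := by
  rw [mem_commEigenspace_iff] at *
  calc a * b * e - e * (a * b) = a * (b * e - e * b) + (a * e - e * a) * b := by noncomm_ring
    _ = (c + d) • (a * b) := by rw [ha, hb, mul_smul_comm, smul_mul_assoc, add_smul, add_comm]

theorem pow_mem_commEigenspace {e a : Module.End K V} {c : K} (ha : a ∈ commEigenspace e c)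
    (k : ℕ) : a ^ k ∈ commEigenspace e (k * c) := by
  induction k with
  | zero => simp [mem_commEigenspace_iff]
  | succ k ih => simpa [pow_succ, add_mul] using mul_mem_commEigenspace ih ha

theorem mul_mul_eq_of_commute {A : Type*} [Ring A] {D X D' c : A} (hX : D * X = X * D + c)
    (hD : Commute D D') : D * (X * D') = X * D' * D + c * D' := by
  rw [← mul_assoc, hX, add_mul, mul_assoc, hD.eq, mul_assoc]

theorem mul_mul_eq_of_anticommute {A : Type*} [Ring A] {D G D' c : A}
    (hG : D * G = c - G * D) (hD : D * D' = -(D' * D)) : D * (G * D') = G * D' * D + c * D' := by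
  rw [← mul_assoc, hG, sub_mul, mul_assoc, hD]
  noncomm_ring

end Commutator

namespace Super

open TensorProduct LinearMap MvPolynomial

variable (m n : ℕ)

theorem gd_mul_gg (j k : Fin (2 * n)) (x : Grass n) :
    gd n j (gg n k * x) = (if j = k then x else 0) - gg n k * gd n j x := by
  rw [gd, gg, CliffordAlgebra.contractLeft_ι_mul]
  congr 1
  simp [Pi.single_apply]

theorem pderiv_pderiv_comm (i k : Fin m) (p : Poly m) :
    pderiv i (pderiv k p) = pderiv k (pderiv i p) := by
  induction p using MvPolynomial.induction_on with
  | C a => simp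
  | add p q hp hq => simp [hp, hq]
  | mul_X p j hp =>
      simp only [pderiv_mul, map_add, pderiv_X, Pi.single_apply, apply_ite (pderiv i),
        apply_ite (pderiv k), pderiv_one, map_zero, hp, ite_self]
      ring

theorem dx_mul_mulX (i k : Fin m) :
    dx m n i * mulX m n k = mulX m n k * dx m n i + if i = k then 1 else 0 := by
  refine TensorProduct.ext' fun p g => ?_
  by_cases h : i = k <;>
    simp [h, dx, mulX, Algebra.TensorProduct.tmul_mul_tmul, add_tmul, add_comm]

theorem commute_dx_dx (i k : Fin m) : Commute (dx m n i) (dx m n k) :=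
  TensorProduct.ext' fun p g => by simp [dx, pderiv_pderiv_comm]

theorem commute_dx_mulG (i : Fin m) (j : Fin (2 * n)) : Commute (dx m n i) (mulG m n j) :=
  TensorProduct.ext' fun p g => by simp [dx, mulG, Algebra.TensorProduct.tmul_mul_tmul]

theorem commute_dx_dg (i : Fin m) (j : Fin (2 * n)) : Commute (dx m n i) (dg m n j) :=
  TensorProduct.ext' fun p g => by simp [dx, dg]

theorem commute_dg_mulX (j : Fin (2 * n)) (i : Fin m) : Commute (dg m n j) (mulX m n i) :=
  TensorProduct.ext' fun p g => by simp [dg, mulX, Algebra.TensorProduct.tmul_mul_tmul]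

theorem dg_mul_mulG (j k : Fin (2 * n)) :
    dg m n j * mulG m n k = (if j = k then 1 else 0) - mulG m n k * dg m n j := by
  refine TensorProduct.ext' fun p g => ?_
  by_cases h : j = k <;>
    simp [h, dg, mulG, Algebra.TensorProduct.tmul_mul_tmul, gd_mul_gg, tmul_sub, tmul_neg]

theorem dg_mul_dg (j k : Fin (2 * n)) : dg m n j * dg m n k = -(dg m n k * dg m n j) :=
  TensorProduct.ext' fun p g => by
    simp [dg, gd, CliffordAlgebra.contractLeft_comm (LinearMap.proj j) (LinearMap.proj k) g,
      tmul_neg]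

theorem euler_eq_sum :
    Euler m n = ∑ i, mulX m n i * dx m n i + ∑ j, mulG m n j * dg m n j := rfl

theorem dx_mem_commEigenspace_euler (i : Fin m) :
    dx m n i ∈ commEigenspace (Euler m n) (1 : ℝ) := by
  have hX (k : Fin m) : dx m n i * (mulX m n k * dx m n k) =
      mulX m n k * dx m n k * dx m n i + (if i = k then 1 else 0) * dx m n k :=
    mul_mul_eq_of_commute (A := Module.End ℝ (P m n)) (dx_mul_mulX m n i k)
      (commute_dx_dx m n i k)
  have hG (j : Fin (2 * n)) :
      dx m n i * (mulG m n j * dg m n j) = mulG m n j * dg m n j * dx m n i :=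
    ((commute_dx_mulG m n i j).mul_right (commute_dx_dg m n i j)).eq
  rw [mem_commEigenspace_iff, one_smul, euler_eq_sum, mul_add, Finset.mul_sum, Finset.mul_sum]
  simp only [hX, hG, Finset.sum_add_distrib, ite_mul, one_mul, zero_mul, Finset.sum_ite_eq,
    Finset.mem_univ, if_true, add_mul, Finset.sum_mul]
  abel

theorem dg_mem_commEigenspace_euler (j : Fin (2 * n)) :
    dg m n j ∈ commEigenspace (Euler m n) (1 : ℝ) := by
  have hX (i : Fin m) :
      dg m n j * (mulX m n i * dx m n i) = mulX m n i * dx m n i * dg m n j :=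
    ((commute_dg_mulX m n j i).mul_right (commute_dx_dg m n i j).symm).eq
  have hG (k : Fin (2 * n)) : dg m n j * (mulG m n k * dg m n k) =
      mulG m n k * dg m n k * dg m n j + (if j = k then 1 else 0) * dg m n k :=
    mul_mul_eq_of_anticommute (A := Module.End ℝ (P m n)) (dg_mul_mulG m n j k)
      (dg_mul_dg m n j k)
  rw [mem_commEigenspace_iff, one_smul, euler_eq_sum, mul_add, Finset.mul_sum, Finset.mul_sum]
  simp only [hX, hG, Finset.sum_add_distrib, ite_mul, one_mul, zero_mul, Finset.sum_ite_eq,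
    Finset.mem_univ, if_true, add_mul, Finset.sum_mul]
  abel

theorem delta_mem_commEigenspace_euler : Delta m n ∈ commEigenspace (Euler m n) (2 : ℝ) := by
  have hmul {a b : Module.End ℝ (P m n)} (ha : a ∈ commEigenspace (Euler m n) (1 : ℝ))
      (hb : b ∈ commEigenspace (Euler m n) (1 : ℝ)) :
      a * b ∈ commEigenspace (Euler m n) (2 : ℝ) := by
    simpa [one_add_one_eq_two] using mul_mem_commEigenspace ha hb
  have hodd : ∑ j, dg m n (idx0 n j) * dg m n (idx1 n j) ∈ commEigenspace (Euler m n) (2 : ℝ) :=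
    Submodule.sum_mem _ fun j _ =>
      hmul (dg_mem_commEigenspace_euler m n _) (dg_mem_commEigenspace_euler m n _)
  have heven : ∑ i, dx m n i * dx m n i ∈ commEigenspace (Euler m n) (2 : ℝ) :=
    Submodule.sum_mem _ fun i _ =>
      hmul (dx_mem_commEigenspace_euler m n i) (dx_mem_commEigenspace_euler m n i)
  -- `Submodule.sub_mem` fails to unify with the subtraction of `Module.End ℝ (P m n)`,
  -- so `Δ` is rewritten with `+` and `•` only.
  have hΔ : Delta m n = (4 : ℝ) • ∑ j, dg m n (idx0 n j) * dg m n (idx1 n j) +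
      (-1 : ℝ) • ∑ i, dx m n i * dx m n i := by
    simp only [Delta, ← Module.End.mul_eq_comp]
    module
  rw [hΔ]
  exact Submodule.add_mem _ (Submodule.smul_mem _ _ hodd) (Submodule.smul_mem _ _ heven)

theorem eval0_mul (x y : P m n) : eval0 m n (x * y) = eval0 m n x * eval0 m n y := by
  let f : P m n →ₐ[ℝ] ℝ := (Algebra.TensorProduct.lid ℝ ℝ).toAlgHom.comp
    (Algebra.TensorProduct.map (MvPolynomial.aeval fun _ : Fin m => (0 : ℝ))
      ExteriorAlgebra.algebraMapInv)
  have hf : eval0 m n = f.toLinearMap := TensorProduct.ext' fun p g => by simp [eval0, f]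
  rw [hf]
  exact map_mul f x y

theorem eval0_euler (R : P m n) : eval0 m n (Euler m n R) = 0 := by
  have hX (i : Fin m) : eval0 m n (X i ⊗ₜ 1) = 0 := by simp [eval0]
  have hG (j : Fin (2 * n)) : eval0 m n (1 ⊗ₜ gg n j) = 0 := by
    simp [eval0, gg, ExteriorAlgebra.algebraMapInv]
  simp [euler_eq_sum, mulX, mulG, eval0_mul, hX, hG]

theorem eval0_delta_pow_euler (k : ℕ) (R : P m n) :
    eval0 m n ((Delta m n ^ k) (Euler m n R)) = 2 * k * eval0 m n ((Delta m n ^ k) R) := by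
  have h := mem_commEigenspace_iff.1
    (pow_mem_commEigenspace (delta_mem_commEigenspace_euler m n) k)
  have := congr(eval0 m n ($h R))
  simp only [Module.End.mul_apply, LinearMap.sub_apply, LinearMap.smul_apply, map_sub, map_smul,
    eval0_euler, sub_zero, smul_eq_mul] at this
  rw [this]
  ring

open Real in
def sphereCoeff (M : ℝ) (k : ℕ) : ℝ :=
  (-1) ^ k * (2 * π ^ (M / 2)) / (4 ^ k * k.factorial * Gamma (k + M / 2))

open Real in
def ballCoeff (M : ℝ) (k : ℕ) : ℝ :=
  (-1) ^ k * π ^ (M / 2) / (4 ^ k * k.factorial * Gamma (k + M / 2 + 1))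

theorem SS_eq_tsum (R : P m n) :
    SS m n R = ∑' k, sphereCoeff (Mdim m n) k * eval0 m n ((Delta m n ^ k) R) := rfl

theorem SB_eq_tsum (R : P m n) :
    SB m n R = ∑' k, ballCoeff (Mdim m n) k * eval0 m n ((Delta m n ^ k) R) := rfl

theorem sphereCoeff_succ_mul (M : ℝ) (k : ℕ) :
    sphereCoeff M (k + 1) * (2 * (k + 1 : ℕ)) = -ballCoeff M k := by
  rw [sphereCoeff, ballCoeff, Nat.factorial_succ]
  push_cast
  rw [add_right_comm]
  field_simp
  ring

end Super

open Super

/-- Green's theorem, first form, scalar part: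
`∫_SS (𝔼 R) = -∫_SB (Δ R)` for every superpolynomial `R`. -/
theorem green_first_form (m n : ℕ) (R : Super.P m n) :
    Super.SS m n (Super.Euler m n R) = -Super.SB m n (Super.Delta m n R) := by
  have hshift (k : ℕ) : sphereCoeff (Mdim m n) (k + 1) *
      eval0 m n ((Delta m n ^ (k + 1)) (Euler m n R)) =
      -(ballCoeff (Mdim m n) k * eval0 m n ((Delta m n ^ k) (Delta m n R))) := by
    rw [eval0_delta_pow_euler, ← mul_assoc, sphereCoeff_succ_mul, pow_succ, Module.End.mul_apply,
      neg_mul]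
  rw [SS_eq_tsum, SB_eq_tsum, ← tsum_neg, ← Nat.succ_injective.tsum_eq]
  · exact tsum_congr hshift
  · rintro (_ | k) hk
    · simp [eval0_euler] at hk
    · exact ⟨k, rfl⟩
end
end

section
/- Suppose M = m − 2n ∉ {0, −2, −4, …}. For all integers k ≥ 2 and l ≥ 1 with k + l even, setting s = (k + l)/2 and assuming s + M/2 − 1 ≠ 0, the coefficients α_l satisfy the recursion α_l(t^k) = (k/(4s(s + M/2 − 1))) · ( (k−1)·α_l(t^{k−2}) + 2l·α_{l−1}(t^{k−1}) ). -/
set_option synthInstance.maxHeartbeats 1000000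
set_option maxHeartbeats 1000000

open scoped TensorProduct

noncomputable section

namespace Super

/-- The Funk–Hecke coefficient `α_l(t^k)`:
`(k!/(k-l)!)·(2π^{(M-1)/2}/2^l)·Γ((k-l+1)/2)/Γ((M+k+l)/2)` if `k + l` is even and
`k ≥ l`, and `0` otherwise. -/
noncomputable def alphaC (m n : ℕ) (l k : ℕ) : ℝ :=
  if Even (k + l) ∧ l ≤ k then
    (k.factorial : ℝ) / ((k - l).factorial : ℝ) *
      (2 * Real.pi ^ (((Mdim m n : ℝ) - 1) / 2) / 2 ^ l) *
      (Real.Gamma (((k : ℝ) - (l : ℝ) + 1) / 2) /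
        Real.Gamma (((Mdim m n : ℝ) + (k : ℝ) + (l : ℝ)) / 2))
  else 0

end Super

/-!
With `x = s + M/2 - 1` and `Γ(x + 1) = x Γ(x)`, the three coefficients share the factor
`2π^{(M-1)/2} / (2^l Γ(x))`, so the recursion reduces to an identity between the numbers
`k^{\underline l} Γ((k - l + 1)/2)`. That identity follows from the recursions of the falling factorial
and `Γ(a + 1) = a Γ(a)` at `a = (k - l - 1)/2`, which is nonzero because `k + l` is even.
-/

theorem Nat.cast_descFactorial_succ {R : Type*} [Ring R] (n l : ℕ) :
    (n.descFactorial (l + 1) : R) = n.descFactorial l * ((n : R) - l) := by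
  rw [← descPochhammer_eval_eq_descFactorial, descPochhammer_succ_eval,
    descPochhammer_eval_eq_descFactorial]

namespace Super

open Real

def descFactorialMulGamma (l k : ℕ) : ℝ :=
  k.descFactorial l * Gamma (((k : ℝ) - l + 1) / 2)

theorem alphaC_eq_descFactorialMulGamma {m n l k : ℕ} (h : Even (k + l)) :
    alphaC m n l k = 2 * π ^ (((Mdim m n : ℝ) - 1) / 2) / 2 ^ l *
      (descFactorialMulGamma l k / Gamma (((Mdim m n : ℝ) + k + l) / 2)) := by
  unfold alphaC descFactorialMulGamma
  split_ifs with hkl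
  · rw [← Nat.factorial_mul_descFactorial hkl.2, Nat.cast_mul,
      mul_div_cancel_left₀ _ (by positivity)]
    ring
  · rw [Nat.descFactorial_eq_zero_iff_lt.mpr (not_le.mp fun h' => hkl ⟨h, h'⟩)]
    simp

theorem descFactorialMulGamma_recursion {k l : ℕ} (hkl : k ≠ l) :
    2 * ((k : ℝ) + l + 3) * descFactorialMulGamma (l + 1) (k + 2) =
      (k + 2) * ((k + 1) * descFactorialMulGamma (l + 1) k +
        4 * (l + 1) * descFactorialMulGamma l (k + 1)) := by
  unfold descFactorialMulGamma
  set a : ℝ := ((k : ℝ) - l) / 2 with ha_def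
  have ha : a ≠ 0 := div_ne_zero (sub_ne_zero.mpr (Nat.cast_injective.ne hkl)) two_ne_zero
  push_cast
  rw [show ((k : ℝ) + 2 - (l + 1) + 1) / 2 = a + 1 by ring,
    show ((k : ℝ) + 1 - l + 1) / 2 = a + 1 by ring,
    show ((k : ℝ) - (l + 1) + 1) / 2 = a by ring, Gamma_add_one ha]
  have hD : ((k + 2).descFactorial (l + 1) : ℝ) = (k + 2) * (k + 1).descFactorial l := by
    rw [Nat.succ_descFactorial_succ]
    push_cast
    ring
  have hD' : ((k : ℝ) + 1) * k.descFactorial l = (k + 1 - l) * (k + 1).descFactorial l := by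
    have h := Nat.cast_descFactorial_succ (R := ℝ) (k + 1) l
    rw [Nat.succ_descFactorial_succ] at h
    push_cast at h
    linarith
  rw [hD, Nat.cast_descFactorial_succ]
  linear_combination (-(k + 2) * ((k : ℝ) - l) * Gamma a) * hD'
    + (2 * (k + 2) * (k + 1 - l) * (k + 1).descFactorial l * Gamma a) * ha_def

end Super

theorem alpha_recursion_general (m n : ℕ)
    (k l : ℕ) (hk : 2 ≤ k) (hl : 1 ≤ l) (he : Even (k + l))
    (s : ℝ) (hs : s = ((k : ℝ) + (l : ℝ)) / 2)
    (hs0 : s + (Super.Mdim m n : ℝ) / 2 - 1 ≠ 0) :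
    Super.alphaC m n l k =
      (k : ℝ) / (4 * s * (s + (Super.Mdim m n : ℝ) / 2 - 1)) *
        (((k : ℝ) - 1) * Super.alphaC m n l (k - 2) +
          2 * (l : ℝ) * Super.alphaC m n (l - 1) (k - 1)) := by
  obtain ⟨k, rfl⟩ : ∃ j, k = j + 2 := ⟨k - 2, by omega⟩
  obtain ⟨l, rfl⟩ : ∃ j, l = j + 1 := ⟨l - 1, by omega⟩
  obtain ⟨v, hv⟩ := he
  simp only [Nat.add_sub_cancel, show k + 2 - 1 = k + 1 by omega]
  rw [Super.alphaC_eq_descFactorialMulGamma ⟨v, hv⟩,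
    Super.alphaC_eq_descFactorialMulGamma (k := k) ⟨v - 1, by omega⟩,
    Super.alphaC_eq_descFactorialMulGamma (k := k + 1) ⟨v - 1, by omega⟩]
  set x := s + (Super.Mdim m n : ℝ) / 2 - 1 with hx
  push_cast at hs ⊢
  rw [show ((Super.Mdim m n : ℝ) + (k + 2) + (l + 1)) / 2 = x + 1 by rw [hx, hs]; ring,
    show ((Super.Mdim m n : ℝ) + k + (l + 1)) / 2 = x by rw [hx, hs]; ring,
    show ((Super.Mdim m n : ℝ) + (k + 1) + l) / 2 = x by rw [hx, hs]; ring,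
    Real.Gamma_add_one hs0]
  -- `Γ` is `0` at its poles, so there both sides are `0`, as for the entire function `1/Γ`.
  rcases eq_or_ne (Real.Gamma x) 0 with hΓ | hΓ
  · simp [hΓ]
  have hrec := Super.descFactorialMulGamma_recursion (k := k) (l := l) (by omega)
  have hs' : s ≠ 0 := by rw [hs]; positivity
  field_simp
  rw [pow_succ]
  linear_combination (2 ^ l : ℝ) * hrec + (4 * 2 ^ l * Super.descFactorialMulGamma (l + 1) (k + 2)) * hs

/-- For `M ∉ {0, -2, -4, …}`, `k ≥ 2`, `l ≥ 1`, `k + l` even,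
`s = (k+l)/2` and `s + M/2 - 1 ≠ 0`, the recursion
`α_l(t^k) = (k/(4s(s + M/2 - 1)))·((k-1)·α_l(t^{k-2}) + 2l·α_{l-1}(t^{k-1}))` holds. -/
theorem alpha_recursion (m n : ℕ)
    (hM : ∀ t : ℕ, Super.Mdim m n ≠ -(2 * (t : ℤ)))
    (k l : ℕ) (hk : 2 ≤ k) (hl : 1 ≤ l) (he : Even (k + l))
    (s : ℝ) (hs : s = ((k : ℝ) + (l : ℝ)) / 2)
    (hs0 : s + (Super.Mdim m n : ℝ) / 2 - 1 ≠ 0) :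
    Super.alphaC m n l k =
      (k : ℝ) / (4 * s * (s + (Super.Mdim m n : ℝ) / 2 - 1)) *
        (((k : ℝ) - 1) * Super.alphaC m n l (k - 2) +
          2 * (l : ℝ) * Super.alphaC m n (l - 1) (k - 1)) :=
  alpha_recursion_general m n k l hk hl he s hs hs0
end
end
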